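/- arXiv:1602.09032 — 4 statements merged into one kernel-verified Lean document; each statement's English description precedes it below -/
import Mathlib

section
/- Let k be a field of characteristic 0, G a group, and H a subgroup of G of finite index. If V is a finite-dimensional k-linear representation of G that is semisimple (a direct sum of irreducible subrepresentations), then the restriction of V to H is a semisimple representation of H. -/
/-- A submodule stable under a representation, i.e. a subrepresentation. -/
def Representation.IsSubrep {k G V : Type*} [CommSemiring k] [Monoid G]
    [AddCommMonoid V] [Module k V] (ρ : Representation k G V) (p : Submodule k V) : Prop :=
  ∀ g : G, ∀ x ∈ p, ρ g x ∈ p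

/-- A representation is irreducible if the underlying space is nonzero and the only
subrepresentations are `⊥` and `⊤`. -/
def Representation.IsIrreducibleRep {k G V : Type*} [CommSemiring k] [Monoid G]
    [AddCommMonoid V] [Module k V] (ρ : Representation k G V) : Prop :=
  (⊥ : Submodule k V) ≠ ⊤ ∧ ∀ p : Submodule k V, ρ.IsSubrep p → p = ⊥ ∨ p = ⊤

/-- `p` is an irreducible subrepresentation of `ρ`: it is stable, nonzero, and has no
stable submodule strictly between `⊥` and itself. -/
def Representation.IsIrreducibleSubrep {k G V : Type*} [CommSemiring k] [Monoid G]
    [AddCommMonoid V] [Module k V] (ρ : Representation k G V) (p : Submodule k V) : Prop :=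
  ρ.IsSubrep p ∧ p ≠ ⊥ ∧ ∀ q : Submodule k V, q ≤ p → ρ.IsSubrep q → q = ⊥ ∨ q = p

/-- A representation is semisimple if the underlying space is the direct sum (an independent
supremum exhausting the space) of irreducible subrepresentations. -/
def Representation.IsSemisimple {k G V : Type*} [CommSemiring k] [Monoid G]
    [AddCommMonoid V] [Module k V] (ρ : Representation k G V) : Prop :=
  ∃ S : Set (Submodule k V), (∀ p ∈ S, ρ.IsIrreducibleSubrep p) ∧
    sSupIndep S ∧ sSup S = ⊤

/-- The representation induced on a stable submodule. -/
def Representation.subRep {k G V : Type*} [CommSemiring k] [Monoid G]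
    [AddCommMonoid V] [Module k V] (ρ : Representation k G V) (p : Submodule k V)
    (h : ρ.IsSubrep p) : Representation k G p where
  toFun g := (ρ g).restrict (h g)
  map_one' := by
    ext x
    simp [LinearMap.restrict_apply]
  map_mul' g g' := by
    ext x
    simp [LinearMap.restrict_apply]

/-- The `g`-conjugate of a representation of a normal subgroup `N`:
`ρ^g (n) = ρ (g⁻¹ * n * g)`. -/
def Representation.conj {k G W : Type*} [CommSemiring k] [Group G]
    [AddCommMonoid W] [Module k W] (N : Subgroup G) [N.Normal]
    (θ : Representation k N W) (g : G) : Representation k N W :=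
  θ.comp (MulAut.conjNormal g⁻¹).toMonoidHom

/-- An isomorphism of representations: an equivariant `k`-linear equivalence. -/
def RepIso {k G V W : Type*} [CommSemiring k] [Monoid G] [AddCommMonoid V] [Module k V]
    [AddCommMonoid W] [Module k W] (θ₁ : Representation k G V)
    (θ₂ : Representation k G W) : Prop :=
  ∃ e : V ≃ₗ[k] W, ∀ (g : G) (x : V), e (θ₁ g x) = θ₂ g (e x)
/-- The twist of a representation by a one-dimensional representation (character)
`χ : G →* kˣ`, i.e. `g ↦ χ(g) • ρ(g)`. -/
def twistRep {k G V : Type*} [CommSemiring k] [Monoid G] [AddCommMonoid V] [Module k V]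
    (ρ : Representation k G V) (χ : G →* kˣ) : Representation k G V where
  toFun g := (χ g : k) • ρ g
  map_one' := by simp
  map_mul' g g' := by
    ext v
    simp only [map_mul, Units.val_mul, Module.End.mul_apply, LinearMap.smul_apply, map_smul,
      mul_smul]
    rw [smul_comm]

/-- The direct sum of a family of representations. -/
def dirSumRep {k G : Type*} [CommSemiring k] [Monoid G] {ι : Type*} {W : ι → Type*}
    [∀ i, AddCommMonoid (W i)] [∀ i, Module k (W i)]
    (θ : ∀ i, Representation k G (W i)) : Representation k G (∀ i, W i) where
  toFun g := LinearMap.pi fun i => (θ i g).comp (LinearMap.proj i)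
  map_one' := by
    ext v
    simp
  map_mul' g g' := by
    ext v
    simp

/-- The submodule of relations defining the induced representation
`k[G] ⊗_{k[H]} W`, namely the span of the elements `(g h) ⊗ a - g ⊗ (θ h a)`. -/
noncomputable def indRel {k G W : Type*} [CommSemiring k] [Group G] [AddCommGroup W] [Module k W]
    (H : Subgroup G) (θ : Representation k H W) : Submodule k (G →₀ W) :=
  Submodule.span k
    {x | ∃ (g : G) (h : H) (a : W), x = Finsupp.single (g * (h : G)) a - Finsupp.single g (θ h a)}

/-- The induced representation `Ind_H^G θ = k[G] ⊗_{k[H]} W`, realized as the quotient of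
`G →₀ W` by the relations `(g h) ⊗ a = g ⊗ (θ h a)`, with `G` acting by left translation. -/
noncomputable def indRep {k G W : Type*} [CommRing k] [Group G] [AddCommGroup W] [Module k W]
    (H : Subgroup G) (θ : Representation k H W) :
    Representation k G ((G →₀ W) ⧸ indRel H θ) where
  toFun g₀ := Submodule.mapQ _ _ (Finsupp.lmapDomain W k (g₀ * ·)) (by
    rw [indRel, Submodule.span_le]
    rintro x ⟨g, h, a, rfl⟩
    simp only [SetLike.mem_coe, Submodule.mem_comap, map_sub, Finsupp.lmapDomain_apply,
      Finsupp.mapDomain_single]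
    apply Submodule.subset_span
    exact ⟨g₀ * g, h, a, by rw [mul_assoc]⟩)
  map_one' := by
    apply Submodule.linearMap_qext
    ext g w
    simp
  map_mul' g₀ g₁ := by
    apply Submodule.linearMap_qext
    ext g w
    simp [mul_assoc]

section Aux

open Module

variable {k G V : Type*} [Field k] [Group G] [AddCommGroup V] [Module k V]

namespace Representation

lemma IsSubrep.inf' {ρ : Representation k G V} {p q : Submodule k V}
    (hp : ρ.IsSubrep p) (hq : ρ.IsSubrep q) : ρ.IsSubrep (p ⊓ q) :=
  fun g x hx => ⟨hp g x hx.1, hq g x hx.2⟩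

lemma IsSubrep.sup' {ρ : Representation k G V} {p q : Submodule k V}
    (hp : ρ.IsSubrep p) (hq : ρ.IsSubrep q) : ρ.IsSubrep (p ⊔ q) := by
  intro g x hx
  obtain ⟨a, ha, b, hb, rfl⟩ := Submodule.mem_sup.mp hx
  exact Submodule.mem_sup.mpr ⟨ρ g a, hp g a ha, ρ g b, hq g b hb, (map_add _ _ _).symm⟩

/-- In a finite-dimensional representation, every nonzero subrepresentation contains an
irreducible subrepresentation. -/
lemma exists_irreducible_le [FiniteDimensional k V] (ρ : Representation k G V)
    {p : Submodule k V} (hp : ρ.IsSubrep p) (hne : p ≠ ⊥) :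
    ∃ W, W ≤ p ∧ ρ.IsIrreducibleSubrep W := by
  set s : Set ℕ := {n | ∃ q : Submodule k V, ρ.IsSubrep q ∧ q ≤ p ∧ q ≠ ⊥ ∧ finrank k q = n}
    with hs_def
  have hs : s.Nonempty := ⟨finrank k p, p, hp, le_rfl, hne, rfl⟩
  obtain ⟨W, hWs, hWle, hWne, hWr⟩ := Nat.sInf_mem hs
  refine ⟨W, hWle, hWs, hWne, fun q hq hqs => ?_⟩
  by_cases hqb : q = ⊥
  · exact Or.inl hqb
  · right
    have h1 : finrank k W ≤ finrank k q := by
      rw [hWr]; exact Nat.sInf_le ⟨q, hqs, hq.trans hWle, hqb, rfl⟩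
    exact Submodule.eq_of_le_of_finrank_le hq h1

/-- If the irreducible subrepresentations span, every subrepresentation has a stable
complement. -/
lemma compl_of_sSup_irreds [FiniteDimensional k V] (ρ : Representation k G V)
    (h : sSup {p : Submodule k V | ρ.IsIrreducibleSubrep p} = ⊤)
    {p : Submodule k V} (hp : ρ.IsSubrep p) :
    ∃ q, ρ.IsSubrep q ∧ IsCompl p q := by
  have hmax := (set_has_maximal_iff_noetherian (R := k) (M := V)).mpr inferInstance
  obtain ⟨q, ⟨hq, hdisj⟩, hqmax⟩ := hmax {q : Submodule k V | ρ.IsSubrep q ∧ Disjoint p q}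
    ⟨⊥, fun g x hx => by simp_all, disjoint_bot_right⟩
  refine ⟨q, hq, hdisj, ?_⟩
  rw [codisjoint_iff]
  by_contra hne
  have hnle : ¬ sSup {p : Submodule k V | ρ.IsIrreducibleSubrep p} ≤ p ⊔ q := by
    rw [h]; exact fun hle => hne (top_le_iff.mp hle)
  rw [sSup_le_iff] at hnle
  push_neg at hnle
  obtain ⟨W, hW, hWnle⟩ := hnle
  have hint : ρ.IsSubrep (W ⊓ (p ⊔ q)) := hW.1.inf' (hp.sup' hq)
  rcases hW.2.2 (W ⊓ (p ⊔ q)) inf_le_left hint with hb | ht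
  · have hd : Disjoint (p ⊔ q) W := disjoint_iff.mpr (by rw [inf_comm]; exact hb)
    have hd2 : Disjoint p (q ⊔ W) := hdisj.disjoint_sup_right_of_disjoint_sup_left hd
    have hmem : (q ⊔ W) ∈ {q : Submodule k V | ρ.IsSubrep q ∧ Disjoint p q} :=
      ⟨hq.sup' hW.1, hd2⟩
    have heq : q ⊔ W = q := by
      by_contra hne'
      exact hqmax _ hmem (lt_of_le_of_ne le_sup_left (fun h' => hne' h'.symm))
    exact hWnle ((le_sup_right.trans heq.le).trans le_sup_right)
  · exact hWnle (by rw [← ht]; exact inf_le_right)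

/-- If every subrepresentation has a stable complement, the representation is semisimple. -/
lemma isSemisimple_of_compl [FiniteDimensional k V] (ρ : Representation k G V)
    (hc : ∀ p : Submodule k V, ρ.IsSubrep p → ∃ q, ρ.IsSubrep q ∧ IsCompl p q) :
    ρ.IsSemisimple := by
  suffices key : ∀ n (p : Submodule k V), ρ.IsSubrep p → finrank k p ≤ n →
      ∃ S : Set (Submodule k V), (∀ W ∈ S, ρ.IsIrreducibleSubrep W) ∧ sSupIndep S ∧
        sSup S = p by
    obtain ⟨S, h1, h2, h3⟩ := key (finrank k V) ⊤ (fun g x _ => Submodule.mem_top)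
      (by rw [finrank_top])
    exact ⟨S, h1, h2, h3⟩
  intro n
  induction n with
  | zero =>
    intro p hp hr
    have hpb : p = ⊥ := Submodule.finrank_eq_zero.mp (Nat.le_zero.mp hr)
    exact ⟨∅, by simp, sSupIndep_empty, by simp [hpb]⟩
  | succ n ih =>
    intro p hp hr
    by_cases hpb : p = ⊥
    · exact ⟨∅, by simp, sSupIndep_empty, by simp [hpb]⟩
    obtain ⟨W, hWle, hWirr⟩ := ρ.exists_irreducible_le hp hpb
    obtain ⟨q, hq, hcompl⟩ := hc W hWirr.1
    have hp's : ρ.IsSubrep (q ⊓ p) := hq.inf' hp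
    have hsup : W ⊔ (q ⊓ p) = p := by
      rw [← sup_inf_assoc_of_le q hWle, hcompl.codisjoint.eq_top, top_inf_eq]
    have hdisj : Disjoint W (q ⊓ p) := hcompl.disjoint.mono_right inf_le_left
    have hWnz : finrank k W ≠ 0 := fun h0 => hWirr.2.1 (Submodule.finrank_eq_zero.mp h0)
    have hrank : finrank k (q ⊓ p : Submodule k V) + finrank k W = finrank k p := by
      have h1 := Submodule.finrank_sup_add_finrank_inf_eq W (q ⊓ p)
      rw [hsup, disjoint_iff.mp hdisj] at h1
      simp only [finrank_bot, add_zero] at h1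
      omega
    obtain ⟨S', hS'1, hS'2, hS'3⟩ := ih (q ⊓ p) hp's (by omega)
    have hWS' : W ∉ S' := fun hmem => by
      have hle : W ≤ q ⊓ p := hS'3 ▸ le_sSup hmem
      exact hWirr.2.1 (hdisj.eq_bot_of_le hle)
    refine ⟨insert W S', ?_, ?_, ?_⟩
    · rintro X hX
      rcases Set.mem_insert_iff.mp hX with rfl | hX'
      · exact hWirr
      · exact hS'1 X hX'
    · intro a ha
      rcases Set.mem_insert_iff.mp ha with rfl | haS'
      · rw [Set.insert_diff_self_of_notMem hWS', hS'3]
        exact hdisj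
      · have hle1 : sSup (insert W S' \ {a}) ≤ sSup (S' \ {a}) ⊔ W := by
          refine sSup_le fun x hx => ?_
          rcases Set.mem_insert_iff.mp hx.1 with rfl | hx'
          · exact le_sup_right
          · exact le_sup_left.trans' (le_sSup ⟨hx', hx.2⟩)
        have hd1 : Disjoint (a ⊔ sSup (S' \ {a})) W := by
          refine (hdisj.symm.mono_left ?_)
          refine sup_le (hS'3 ▸ le_sSup haS') ?_
          exact (sSup_le_sSup (Set.diff_subset)).trans hS'3.le
        exact ((hS'2 haS').disjoint_sup_right_of_disjoint_sup_left hd1).mono_right hle1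
    · rw [sSup_insert, hS'3, hsup]

/-- Clifford's theorem: the restriction of a finite-dimensional semisimple representation
to a normal subgroup is spanned by its irreducible subrepresentations. -/
lemma clifford [FiniteDimensional k V] (ρ : Representation k G V)
    (N : Subgroup G) [hNn : N.Normal] (hρ : ρ.IsSemisimple) :
    sSup {p : Submodule k V | Representation.IsIrreducibleSubrep (ρ.comp N.subtype) p} = ⊤ := by
  obtain ⟨S, hS1, -, hS3⟩ := hρ
  rw [← top_le_iff, ← hS3]
  refine sSup_le fun p hpS => ?_
  have hpirr := hS1 p hpS
  have hpN : Representation.IsSubrep (ρ.comp N.subtype) p := fun n x hx => hpirr.1 ↑n x hx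
  obtain ⟨W, hWle, hWirr⟩ := Representation.exists_irreducible_le (ρ.comp N.subtype) hpN hpirr.2.1
  have hmapinv : ∀ (g : G) (q : Submodule k V), (q.map (ρ g)).map (ρ g⁻¹) = q := by
    intro g q
    rw [← Submodule.map_comp]
    have h1 : (ρ g⁻¹).comp (ρ g) = LinearMap.id := by
      rw [← Module.End.mul_eq_comp, ← map_mul, inv_mul_cancel, map_one]
      rfl
    rw [h1, Submodule.map_id]
  have hmapinv' : ∀ (g : G) (q : Submodule k V), (q.map (ρ g⁻¹)).map (ρ g) = q := by
    intro g q
    have := hmapinv g⁻¹ q; rwa [inv_inv] at this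
  have hstab : ∀ g : G, Representation.IsSubrep (ρ.comp N.subtype) (W.map (ρ g)) := by
    rintro g n x ⟨w, hw, rfl⟩
    have hn' : (g⁻¹ * ↑n * g) ∈ N := by
      have := hNn.conj_mem ↑n n.2 g⁻¹
      rwa [inv_inv] at this
    refine ⟨ρ (g⁻¹ * ↑n * g) w, hWirr.1 ⟨_, hn'⟩ w hw, ?_⟩
    show (ρ g * ρ (g⁻¹ * ↑n * g)) w = (ρ ↑n * ρ g) w
    rw [← map_mul, ← map_mul]
    congr 1
    group
  have hirr : ∀ g : G, Representation.IsIrreducibleSubrep (ρ.comp N.subtype) (W.map (ρ g)) := by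
    intro g
    refine ⟨hstab g, ?_, ?_⟩
    · intro hb
      apply hWirr.2.1
      have h2 := hmapinv g W
      rw [hb, Submodule.map_bot] at h2
      exact h2.symm
    · intro q hqle hqN
      by_cases hqb : q = ⊥
      · exact Or.inl hqb
      right
      have hq' : Representation.IsSubrep (ρ.comp N.subtype) (q.map (ρ g⁻¹)) := by
        rintro n x ⟨y, hy, rfl⟩
        have hn' : (g * ↑n * g⁻¹) ∈ N := hNn.conj_mem ↑n n.2 g
        refine ⟨ρ (g * ↑n * g⁻¹) y, hqN ⟨_, hn'⟩ y hy, ?_⟩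
        show (ρ g⁻¹ * ρ (g * ↑n * g⁻¹)) y = (ρ ↑n * ρ g⁻¹) y
        rw [← map_mul, ← map_mul]
        congr 1
        group
      have hle' : q.map (ρ g⁻¹) ≤ W := by
        have h3 := Submodule.map_mono (f := ρ g⁻¹) hqle
        rwa [hmapinv g W] at h3
      have hne' : q.map (ρ g⁻¹) ≠ ⊥ := by
        intro hb
        apply hqb
        have h4 := congrArg (Submodule.map (ρ g)) hb
        rwa [hmapinv' g q, Submodule.map_bot] at h4
      rcases hWirr.2.2 _ hle' hq' with hb | hWeq
      · exact absurd hb hne'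
      · rw [← hWeq, hmapinv' g q]
  have hTle : (⨆ g : G, W.map (ρ g)) ≤ p := iSup_le fun g => by
    rintro x ⟨w, hw, rfl⟩; exact hpirr.1 g w (hWle hw)
  have hTstab : ρ.IsSubrep (⨆ g : G, W.map (ρ g)) := by
    intro g₀ x hx
    have hmle : Submodule.map (ρ g₀) (⨆ g : G, W.map (ρ g)) ≤ ⨆ g : G, W.map (ρ g) := by
      rw [Submodule.map_iSup]
      refine iSup_le fun g => ?_
      rw [← Submodule.map_comp]
      have h5 : (ρ g₀).comp (ρ g) = ρ (g₀ * g) := by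
        rw [← Module.End.mul_eq_comp, ← map_mul]
      rw [h5]
      exact le_iSup (fun g : G => W.map (ρ g)) (g₀ * g)
    exact hmle ⟨x, hx, rfl⟩
  have hT : (⨆ g : G, W.map (ρ g)) = p := by
    rcases hpirr.2.2 _ hTle hTstab with hb | hTp
    · exfalso
      apply hWirr.2.1
      have hW1 : W ≤ ⨆ g : G, W.map (ρ g) := by
        have h6 : W.map (ρ 1) = W := by
          rw [map_one]
          show W.map LinearMap.id = W
          exact Submodule.map_id W
        exact le_trans h6.ge (le_iSup (fun g : G => W.map (ρ g)) 1)
      rw [hb] at hW1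
      exact le_bot_iff.mp hW1
    · exact hTp
  rw [← hT]
  exact iSup_le fun g => le_sSup (hirr g)

/-- Averaging over cosets: if every `N`-subrepresentation has a stable complement and
`N ≤ H` has finite index in `H` (with the index invertible, via `CharZero`), then every
`H`-subrepresentation has a stable complement. -/
lemma compl_of_compl_subgroup [CharZero k] (ρ : Representation k G V)
    (H N : Subgroup G) (hNH : N ≤ H) [hfi : (N.subgroupOf H).FiniteIndex]
    (hc : ∀ p : Submodule k V, Representation.IsSubrep (ρ.comp N.subtype) p →
      ∃ q, Representation.IsSubrep (ρ.comp N.subtype) q ∧ IsCompl p q)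
    {p : Submodule k V} (hp : Representation.IsSubrep (ρ.comp H.subtype) p) :
    ∃ q, Representation.IsSubrep (ρ.comp H.subtype) q ∧ IsCompl p q := by
  classical
  have hpN : Representation.IsSubrep (ρ.comp N.subtype) p := fun n x hx => hp ⟨↑n, hNH n.2⟩ x hx
  obtain ⟨q, hqN, hcompl⟩ := hc p hpN
  set π : V →ₗ[k] V := p.subtype ∘ₗ (p.projectionOnto q hcompl) with hπdef
  have hπp : ∀ x : V, π x ∈ p := fun x => (p.projectionOnto q hcompl x).2
  have hπleft : ∀ x ∈ p, π x = x := fun x hx =>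
    congrArg Subtype.val (Submodule.projectionOnto_apply_left hcompl ⟨x, hx⟩)
  have hπright : ∀ x ∈ q, π x = 0 := fun x hx => by
    show ↑(p.projectionOnto q hcompl x) = (0 : V)
    rw [Submodule.projectionOnto_apply_of_mem_right hcompl hx]
    rfl
  have hπN : ∀ n : G, n ∈ N → ∀ x : V, π (ρ n x) = ρ n (π x) := by
    intro n hn x
    have hxq : x - π x ∈ q := by
      rw [← Submodule.projectionOnto_apply_eq_zero_iff hcompl, map_sub]
      have h1 : p.projectionOnto q hcompl (π x) = p.projectionOnto q hcompl x :=
        Submodule.projectionOnto_apply_left hcompl (p.projectionOnto q hcompl x)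
      rw [h1, sub_self]
    have hxdecomp : π x + (x - π x) = x := by abel
    calc π (ρ n x) = π (ρ n (π x + (x - π x))) := by rw [hxdecomp]
      _ = π (ρ n (π x)) + π (ρ n (x - π x)) := by rw [map_add, map_add]
      _ = ρ n (π x) + 0 := by
          have hmem1 : ρ n (π x) ∈ p := hpN ⟨n, hn⟩ _ (hπp x)
          have hmem2 : ρ n (x - π x) ∈ q := hqN ⟨n, hn⟩ _ hxq
          rw [hπleft _ hmem1, hπright _ hmem2]
      _ = ρ n (π x) := add_zero _
  have hπcomm : ∀ n : G, n ∈ N → π * ρ n = ρ n * π := fun n hn =>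
    LinearMap.ext (hπN n hn)
  set K : Subgroup H := N.subgroupOf H with hKdef
  haveI : Finite (H ⧸ K) := Subgroup.finite_quotient_of_finiteIndex (H := K)
  haveI : Fintype (H ⧸ K) := Fintype.ofFinite _
  set f : H → Module.End k V := fun h => ρ ↑h * π * ρ ((↑h : G)⁻¹) with hfdef
  have hfconst : ∀ a b : H, (QuotientGroup.leftRel K) a b → f a = f b := by
    intro a b hab
    rw [QuotientGroup.leftRel_apply] at hab
    have hmem : ((a⁻¹ * b : H) : G) ∈ N := hab
    have hb : b = a * (a⁻¹ * b) := by group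
    rw [hfdef]
    simp only
    conv_rhs => rw [hb]
    rw [Subgroup.coe_mul, mul_inv_rev, map_mul, map_mul]
    have hcomm : ρ ((a⁻¹ * b : H) : G) * π * ρ (((a⁻¹ * b : H) : G))⁻¹ = π := by
      rw [← hπcomm _ hmem, mul_assoc, ← map_mul, mul_inv_cancel, map_one, mul_one]
    calc ρ (↑a : G) * π * ρ ((↑a : G))⁻¹
        = ρ ↑a * (ρ ((a⁻¹ * b : H) : G) * π * ρ (((a⁻¹ * b : H) : G))⁻¹) * ρ ((↑a : G))⁻¹ := by
          rw [hcomm]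
      _ = ρ ↑a * ρ ((a⁻¹ * b : H) : G) * π * (ρ (((a⁻¹ * b : H) : G))⁻¹ * ρ ((↑a : G))⁻¹) := by
          simp only [mul_assoc]
  set F : H ⧸ K → Module.End k V := Quotient.lift f hfconst with hFdef
  have hFmk : ∀ x : H, F (QuotientGroup.mk x) = f x := fun x => rfl
  have Fmul : ∀ (h : H) (c : H ⧸ K), ρ ↑h * F c * ρ ((↑h : G)⁻¹) = F (h • c) := by
    intro h c
    induction c using Quotient.inductionOn with
    | h x =>
      have hsm : h • (QuotientGroup.mk x : H ⧸ K) = QuotientGroup.mk (h * x) :=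
        MulAction.Quotient.smul_mk K h x
      rw [hsm, hFmk, hFmk, hfdef]
      simp only
      rw [Subgroup.coe_mul, mul_inv_rev, map_mul, map_mul]
      simp only [mul_assoc]
  set T : Module.End k V := ∑ c : H ⧸ K, F c with hTdef
  set m : ℕ := Fintype.card (H ⧸ K) with hmdef
  have hm0 : (m : k) ≠ 0 := Nat.cast_ne_zero.mpr Fintype.card_ne_zero
  set σ : Module.End k V := (m : k)⁻¹ • T with hσdef
  have hFmemp : ∀ (c : H ⧸ K) (x : V), F c x ∈ p := by
    intro c x
    induction c using Quotient.inductionOn with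
    | h h' =>
      rw [hFmk]
      show (ρ ↑h' * π * ρ ((↑h' : G))⁻¹) x ∈ p
      rw [Module.End.mul_apply, Module.End.mul_apply]
      exact hp h' _ (hπp _)
  have hFid : ∀ (c : H ⧸ K), ∀ x ∈ p, F c x = x := by
    intro c x hx
    induction c using Quotient.inductionOn with
    | h h' =>
      rw [hFmk]
      show (ρ ↑h' * π * ρ ((↑h' : G))⁻¹) x = x
      rw [Module.End.mul_apply, Module.End.mul_apply]
      have h1 : ρ ((↑h' : G))⁻¹ x ∈ p := by
        have : ((↑h' : G))⁻¹ = ((h'⁻¹ : H) : G) := rfl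
        rw [this]
        exact hp h'⁻¹ x hx
      rw [hπleft _ h1]
      show (ρ ↑h' * ρ ((↑h' : G))⁻¹) x = x
      rw [← map_mul, mul_inv_cancel, map_one]
      rfl
  have hσp : ∀ x : V, σ x ∈ p := by
    intro x
    rw [hσdef]
    rw [LinearMap.smul_apply]
    refine Submodule.smul_mem p _ ?_
    rw [hTdef, LinearMap.sum_apply]
    exact Submodule.sum_mem p fun c _ => hFmemp c x
  have hσid : ∀ x ∈ p, σ x = x := by
    intro x hx
    rw [hσdef, LinearMap.smul_apply, hTdef, LinearMap.sum_apply]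
    rw [Finset.sum_congr rfl fun c _ => hFid c x hx, Finset.sum_const]
    rw [Finset.card_univ, ← hmdef, ← Nat.cast_smul_eq_nsmul k m x, inv_smul_smul₀ hm0]
  have hTcomm : ∀ h : H, ρ (↑h : G) * T = T * ρ (↑h : G) := by
    intro h
    have h1 : ρ ↑h * T * ρ ((↑h : G))⁻¹ = T := by
      rw [hTdef, Finset.mul_sum, Finset.sum_mul]
      rw [Finset.sum_congr rfl fun c _ => Fmul h c]
      exact Equiv.sum_comp (MulAction.toPerm h) F
    calc ρ (↑h : G) * T = ρ ↑h * T * (ρ ((↑h : G))⁻¹ * ρ ↑h) := by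
          rw [← map_mul, inv_mul_cancel, map_one, mul_one]
      _ = (ρ ↑h * T * ρ ((↑h : G))⁻¹) * ρ ↑h := by rw [← mul_assoc]
      _ = T * ρ ↑h := by rw [h1]
  have hσcomm : ∀ h : H, ρ (↑h : G) * σ = σ * ρ (↑h : G) := by
    intro h
    rw [hσdef, mul_smul_comm, smul_mul_assoc, hTcomm h]
  refine ⟨LinearMap.ker σ, ?_, ?_, ?_⟩
  · intro h x hx
    show ρ (↑h : G) x ∈ LinearMap.ker σ
    have : σ (ρ (↑h : G) x) = ρ (↑h : G) (σ x) := by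
      rw [← Module.End.mul_apply, ← hσcomm h, Module.End.mul_apply]
    rw [LinearMap.mem_ker] at hx ⊢
    rw [this, hx, map_zero]
  · rw [disjoint_iff]
    rw [Submodule.eq_bot_iff]
    rintro x ⟨hx1, hx2⟩
    have hx2' : σ x = 0 := hx2
    rw [← hσid x hx1, hx2']
  · rw [codisjoint_iff, eq_top_iff]
    intro x _
    refine Submodule.mem_sup.mpr ⟨σ x, hσp x, x - σ x, ?_, by abel⟩
    rw [LinearMap.mem_ker, map_sub]
    have hσσ : σ (σ x) = σ x := hσid _ (hσp x)
    rw [hσσ, sub_self]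

end Representation

end Aux

/-- Over a field of characteristic zero, the restriction of a semisimple finite-dimensional
representation to a finite-index subgroup is semisimple. -/
theorem restriction_to_finiteIndex_subgroup_isSemisimple
    {k G V : Type*} [Field k] [CharZero k] [Group G]
    [AddCommGroup V] [Module k V] [FiniteDimensional k V]
    (H : Subgroup G) (hH : H.FiniteIndex)
    (ρ : Representation k G V) (hρ : ρ.IsSemisimple) :
    Representation.IsSemisimple (ρ.comp H.subtype) := by
  set N : Subgroup G := H.normalCore with hNdef
  haveI hNfi : N.FiniteIndex := @Subgroup.finiteIndex_normalCore G _ H hH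
  haveI : (N.subgroupOf H).FiniteIndex := by
    constructor
    intro h0
    have h1 : N.relIndex H ∣ N.index := Subgroup.relIndex_dvd_index_of_le H.normalCore_le
    rw [Subgroup.relIndex] at h1
    rw [h0] at h1
    exact hNfi.index_ne_zero (zero_dvd_iff.mp h1)
  have h1 := ρ.clifford N hρ
  have h2 := fun p hp => Representation.compl_of_sSup_irreds (ρ.comp N.subtype) h1 (p := p) hp
  have h3 := fun p hp => ρ.compl_of_compl_subgroup H N H.normalCore_le h2 (p := p) hp
  exact Representation.isSemisimple_of_compl (ρ.comp H.subtype) h3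
end

section
/- Let k be a field, G a group, N a normal subgroup of G, and V a finite-dimensional irreducible k-linear representation of G. If A and A' are two irreducible N-subrepresentations of the restriction of V to N, then there exists g ∈ G such that A' is isomorphic to the g-conjugate representation A^g. -/
section CliffordAux

variable {k G V : Type*} [Field k] [Group G] [AddCommGroup V] [Module k V]
variable {N : Subgroup G} [N.Normal] {ρ : Representation k G V}

private lemma repApply_inv_apply (ρ : Representation k G V) (g : G) (x : V) :
    ρ g⁻¹ (ρ g x) = x := by
  have h : ρ g⁻¹ * ρ g = 1 := by rw [← map_mul, inv_mul_cancel, map_one]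
  calc ρ g⁻¹ (ρ g x) = (ρ g⁻¹ * ρ g) x := rfl
    _ = x := by rw [h]; rfl

private lemma mapSubrep {A : Submodule k V} (hA : Representation.IsSubrep (ρ.comp N.subtype) A) (g : G) :
    Representation.IsSubrep (ρ.comp N.subtype) (A.map (ρ g)) := by
  rintro n x hx
  rcases Submodule.mem_map.1 hx with ⟨a, ha, rfl⟩
  have hmem : g⁻¹ * (n : G) * g ∈ N := by
    have := Subgroup.Normal.conj_mem ‹N.Normal› _ n.2 g⁻¹
    simpa using this
  refine Submodule.mem_map.2 ⟨(ρ.comp N.subtype) ⟨g⁻¹ * (n : G) * g, hmem⟩ a, hA _ a ha, ?_⟩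
  show ρ g (ρ (g⁻¹ * (n : G) * g) a) = ρ (n : G) (ρ g a)
  rw [← Module.End.mul_apply, ← map_mul, ← Module.End.mul_apply, ← map_mul]
  congr 1
  group

private lemma mapIrr {A : Submodule k V}
    (hA : Representation.IsIrreducibleSubrep (ρ.comp N.subtype) A) (g : G) :
    Representation.IsIrreducibleSubrep (ρ.comp N.subtype) (A.map (ρ g)) := by
  refine ⟨mapSubrep hA.1 g, ?_, ?_⟩
  · obtain ⟨a, ha, hne⟩ := (Submodule.ne_bot_iff _).1 hA.2.1
    refine (Submodule.ne_bot_iff _).2 ⟨ρ g a, Submodule.mem_map_of_mem ha, fun h => hne ?_⟩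
    have := congrArg (ρ g⁻¹) h
    rwa [repApply_inv_apply, map_zero] at this
  · intro q hq hqs
    have hq' : q.map (ρ g⁻¹) ≤ A := by
      rintro _ ⟨x, hx, rfl⟩
      obtain ⟨a, ha, rfl⟩ := Submodule.mem_map.1 (hq hx)
      rwa [repApply_inv_apply]
    have hqrec : (q.map (ρ g⁻¹)).map (ρ g) = q := by
      ext x
      constructor
      · rintro ⟨_, ⟨y, hy, rfl⟩, rfl⟩
        have : ρ g (ρ g⁻¹ y) = y := by
          have := repApply_inv_apply ρ g⁻¹ y
          rwa [inv_inv] at this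
        rwa [this]
      · intro hx
        refine ⟨ρ g⁻¹ x, Submodule.mem_map_of_mem hx, ?_⟩
        have := repApply_inv_apply ρ g⁻¹ x
        rwa [inv_inv] at this
    rcases hA.2.2 (q.map (ρ g⁻¹)) hq' (mapSubrep hqs g⁻¹) with h | h
    · left; rw [← hqrec, h, Submodule.map_bot]
    · right; rw [← hqrec, h]

private lemma subRep_map_repIso {A : Submodule k V}
    (hA : Representation.IsSubrep (ρ.comp N.subtype) A) (g : G) :
    RepIso (Representation.subRep (ρ.comp N.subtype) (A.map (ρ g)) (mapSubrep hA g))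
      (Representation.conj N (Representation.subRep (ρ.comp N.subtype) A hA) g) := by
  have hmem : ∀ x : ↥(A.map (ρ g)), ρ g⁻¹ (x : V) ∈ A := by
    rintro ⟨x, hx⟩
    obtain ⟨a, ha, rfl⟩ := Submodule.mem_map.1 hx
    rwa [repApply_inv_apply]
  refine ⟨{ toFun := fun x => ⟨ρ g⁻¹ x, hmem x⟩
            map_add' := fun x y => Subtype.ext (by simp)
            map_smul' := fun c x => Subtype.ext (by simp)
            invFun := fun a => ⟨ρ g a, Submodule.mem_map_of_mem a.2⟩
            left_inv := fun x => Subtype.ext (by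
              show ρ g (ρ g⁻¹ (x : V)) = x
              have := repApply_inv_apply ρ g⁻¹ (x : V)
              rwa [inv_inv] at this)
            right_inv := fun a => Subtype.ext (repApply_inv_apply ρ g a) }, ?_⟩
  intro n x
  apply Subtype.ext
  show ρ g⁻¹ (ρ (n : G) (x : V)) =
    ρ ((MulAut.conjNormal g⁻¹ n : N) : G) (ρ g⁻¹ (x : V))
  have hc : ((MulAut.conjNormal g⁻¹ n : N) : G) = g⁻¹ * (n : G) * g := by simp
  rw [hc, ← Module.End.mul_apply, ← map_mul, ← Module.End.mul_apply, ← map_mul]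
  congr 2
  group

private lemma exists_repIso_of_compl
    {U W A' : Submodule k V}
    (hU : Representation.IsSubrep (ρ.comp N.subtype) U)
    (hW : Representation.IsIrreducibleSubrep (ρ.comp N.subtype) W)
    (hA' : Representation.IsIrreducibleSubrep (ρ.comp N.subtype) A')
    (hUW : U ⊓ W = ⊥) (hle : A' ≤ U ⊔ W) (hnle : ¬ A' ≤ U) :
    RepIso (Representation.subRep (ρ.comp N.subtype) A' hA'.1) (Representation.subRep (ρ.comp N.subtype) W hW.1) := by
  classical
  have uniq : ∀ (x w w' : V), w ∈ W → w' ∈ W → x - w ∈ U → x - w' ∈ U → w = w' := by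
    intro x w w' hw hw' h1 h2
    have hsub : w' - w ∈ U ⊓ W := by
      constructor
      · have := U.sub_mem h1 h2
        simpa using this
      · exact W.sub_mem hw' hw
    rw [hUW, Submodule.mem_bot, sub_eq_zero] at hsub
    exact hsub.symm
  have hex : ∀ x : A', ∃ w, w ∈ W ∧ (x : V) - w ∈ U := by
    intro x
    obtain ⟨u, hu, w, hw, huw⟩ := Submodule.mem_sup.1 (hle x.2)
    exact ⟨w, hw, by rw [← huw]; simpa using hu⟩
  choose F hFW hFU using hex
  have Fadd : ∀ x y : A', F (x + y) = F x + F y := by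
    intro x y
    refine uniq ((x : V) + y) _ _ (hFW _) (W.add_mem (hFW x) (hFW y)) ?_ ?_
    · have := hFU (x + y); simpa using this
    · have := U.add_mem (hFU x) (hFU y)
      simpa [sub_add_sub_comm] using this
  have Fsmul : ∀ (c : k) (x : A'), F (c • x) = c • F x := by
    intro c x
    refine uniq (c • (x : V)) _ _ (hFW _) (W.smul_mem c (hFW x)) ?_ ?_
    · have := hFU (c • x); simpa using this
    · have := U.smul_mem c (hFU x)
      simpa [smul_sub] using this
  have Fequi : ∀ (n : N) (x x' : A'), (x' : V) = ρ (n : G) (x : V) →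
      F x' = ρ (n : G) (F x) := by
    intro n x x' hx'
    refine uniq (x' : V) _ _ (hFW _) (hW.1 n _ (hFW x)) (hFU _) ?_
    rw [hx', ← map_sub]
    exact hU n _ (hFU x)
  let f : A' →ₗ[k] W :=
    { toFun := fun x => ⟨F x, hFW x⟩
      map_add' := fun x y => Subtype.ext (Fadd x y)
      map_smul' := fun c x => Subtype.ext (Fsmul c x) }
  have hAU : A' ⊓ U = ⊥ := by
    rcases hA'.2.2 (A' ⊓ U) inf_le_left
        (fun n x hx => ⟨hA'.1 n x hx.1, hU n x hx.2⟩) with h | h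
    · exact h
    · exact absurd (h ▸ inf_le_right : A' ≤ U) hnle
  have hinj : Function.Injective f := by
    rw [← LinearMap.ker_eq_bot, Submodule.eq_bot_iff]
    intro x hx
    have hF0 : F x = 0 := congrArg Subtype.val (LinearMap.mem_ker.1 hx)
    have hxU : (x : V) ∈ U := by
      have := hFU x
      rwa [hF0, sub_zero] at this
    have : (x : V) ∈ A' ⊓ U := ⟨x.2, hxU⟩
    rw [hAU, Submodule.mem_bot] at this
    exact Subtype.ext this
  let R : Submodule k V := (LinearMap.range f).map W.subtype
  have hRle : R ≤ W := Submodule.map_subtype_le _ _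
  have hRstable : Representation.IsSubrep (ρ.comp N.subtype) R := by
    rintro n _ ⟨w, ⟨x, rfl⟩, rfl⟩
    let x' : A' := ⟨ρ (n : G) (x : V), hA'.1 n _ x.2⟩
    refine ⟨f x', ⟨x', rfl⟩, ?_⟩
    show F x' = ρ (n : G) (F x)
    exact Fequi n x x' rfl
  have hRne : R ≠ ⊥ := by
    obtain ⟨a, ha, hane⟩ := (Submodule.ne_bot_iff _).1 hA'.2.1
    refine (Submodule.ne_bot_iff _).2 ⟨F ⟨a, ha⟩, ⟨f ⟨a, ha⟩, ⟨⟨a, ha⟩, rfl⟩, rfl⟩, fun h => ?_⟩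
    have : f ⟨a, ha⟩ = 0 := Subtype.ext h
    have := hinj (this.trans (map_zero f).symm)
    exact hane (congrArg Subtype.val this)
  have hRW : R = W := (hW.2.2 R hRle hRstable).resolve_left hRne
  have hsurj : Function.Surjective f := by
    intro w
    have hwR : (w : V) ∈ R := by rw [hRW]; exact w.2
    obtain ⟨w', ⟨x, hx⟩, hcoe⟩ := hwR
    exact ⟨x, hx.trans (Subtype.ext hcoe)⟩
  refine ⟨LinearEquiv.ofBijective f ⟨hinj, hsurj⟩, ?_⟩
  intro n x
  apply Subtype.ext
  show F ⟨ρ (n : G) (x : V), _⟩ = ρ (n : G) (F x)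
  exact Fequi n x _ rfl

end CliffordAux

/-- Clifford's theorem, transitivity part: any two irreducible `N`-subrepresentations of the
restriction to a normal subgroup `N` of a finite-dimensional irreducible representation of `G`
are conjugate, i.e. `A'` is isomorphic to `A^g` for some `g ∈ G`. -/
theorem irreducible_subreps_of_restriction_are_conjugate
    {k G V : Type*} [Field k] [Group G]
    [AddCommGroup V] [Module k V] [FiniteDimensional k V]
    (N : Subgroup G) [N.Normal]
    (ρ : Representation k G V) (hρ : ρ.IsIrreducibleRep)
    (A A' : Submodule k V)
    (hA : Representation.IsIrreducibleSubrep (ρ.comp N.subtype) A)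
    (hA' : Representation.IsIrreducibleSubrep (ρ.comp N.subtype) A') :
    ∃ g : G,
      RepIso (Representation.subRep (ρ.comp N.subtype) A' hA'.1)
        (Representation.conj N (Representation.subRep (ρ.comp N.subtype) A hA.1) g) := by
  classical
  have hWirr : ∀ g : G, Representation.IsIrreducibleSubrep (ρ.comp N.subtype) (A.map (ρ g)) :=
    fun g => mapIrr hA g
  have hmapmul : ∀ g g' : G, (A.map (ρ g')).map (ρ g) = A.map (ρ (g * g')) := by
    intro g g'
    rw [← Submodule.map_comp, ← Module.End.mul_eq_comp, ← map_mul]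
  have hA1 : A.map (ρ 1) = A := by
    rw [map_one]
    exact Submodule.map_id A
  have hT : (⨆ g : G, A.map (ρ g)) = ⊤ := by
    have hstab : ρ.IsSubrep (⨆ g : G, A.map (ρ g)) := by
      intro g x hx
      have hmle : Submodule.map (ρ g) (⨆ g' : G, A.map (ρ g')) ≤ ⨆ g' : G, A.map (ρ g') := by
        rw [Submodule.map_iSup]
        apply iSup_le
        intro g'
        rw [hmapmul g g']
        exact le_iSup (fun g : G => A.map (ρ g)) (g * g')
      exact hmle (Submodule.mem_map_of_mem hx)
    rcases hρ.2 (⨆ g : G, A.map (ρ g)) hstab with h | h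
    · exfalso
      apply hA.2.1
      rw [← le_bot_iff, ← h]
      have := le_iSup (fun g : G => A.map (ρ g)) 1
      rwa [hA1] at this
    · exact h
  set S : Set (Submodule k V) :=
    {U | Representation.IsSubrep (ρ.comp N.subtype) U ∧ ¬ A' ≤ U} with hS
  have hSne : S.Nonempty := by
    refine ⟨⊥, fun n x hx => by rw [Submodule.mem_bot] at hx ⊢; simp [hx],
      fun h => hA'.2.1 (le_bot_iff.1 h)⟩
  obtain ⟨U, hUS, hUmax⟩ := (wellFounded_gt (α := Submodule k V)).has_min S hSne
  have hg : ∃ g : G, ¬ A.map (ρ g) ≤ U := by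
    by_contra h
    push_neg at h
    have : (⊤ : Submodule k V) ≤ U := hT ▸ iSup_le h
    exact hUS.2 (le_trans le_top this)
  obtain ⟨g, hg⟩ := hg
  have hUW : U ⊓ A.map (ρ g) = ⊥ := by
    rcases (hWirr g).2.2 (U ⊓ A.map (ρ g)) inf_le_right
        (fun n x hx => ⟨hUS.1 n x hx.1, (hWirr g).1 n x hx.2⟩) with h | h
    · exact h
    · exact absurd (h ▸ inf_le_left : A.map (ρ g) ≤ U) hg
  have hle : A' ≤ U ⊔ A.map (ρ g) := by
    by_contra hnle
    have hsupst : Representation.IsSubrep (ρ.comp N.subtype) (U ⊔ A.map (ρ g)) := by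
      intro n x hx
      obtain ⟨u, hu, w, hw, rfl⟩ := Submodule.mem_sup.1 hx
      rw [map_add]
      exact Submodule.add_mem_sup (hUS.1 n u hu) ((hWirr g).1 n w hw)
    have hlt : U < U ⊔ A.map (ρ g) := by
      refine lt_of_le_of_ne le_sup_left (fun h => hg ?_)
      conv_rhs => rw [h]
      exact le_sup_right
    exact hUmax _ ⟨hsupst, hnle⟩ hlt
  have iso1 := exists_repIso_of_compl hUS.1 (hWirr g) hA' hUW hle hUS.2
  have iso2 := subRep_map_repIso hA.1 g
  obtain ⟨e1, he1⟩ := iso1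
  obtain ⟨e2, he2⟩ := iso2
  refine ⟨g, e1.trans e2, fun n x => ?_⟩
  rw [LinearEquiv.trans_apply, he1, he2, LinearEquiv.trans_apply]
end

section
/- Let k be an algebraically closed field of characteristic 0, G a group, N a normal subgroup of G such that the quotient G/N is finite cyclic of order m, and let σ ∈ G be an element whose image generates G/N. Let V be a finite-dimensional irreducible k-linear representation of G. Then there exist a positive divisor N' of m and an irreducible N-subrepresentation A of the restriction Res_N V such that: (i) the conjugate representations A^{σ^i} for 0 ≤ i < N' are pairwise non-isomorphic; (ii) A^{σ^{N'}} is isomorphic to A; (iii) Res_N V is isomorphic to the direct sum ⊕_{i=0}^{N'-1} A^{σ^i}; in particular dim_k V = N' · dim_k A. -/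
namespace Clifford

variable {k G V W W' : Type*} [Field k] [Group G] [AddCommGroup V] [Module k V]
  [AddCommGroup W] [Module k W] [AddCommGroup W'] [Module k W']

/-- The linear equivalence given by `ρ g`. -/
noncomputable def repEquiv (ρ : Representation k G V) (g : G) : V ≃ₗ[k] V :=
  LinearEquiv.ofLinear (ρ g) (ρ g⁻¹)
    (by rw [← Module.End.mul_eq_comp, ← map_mul, mul_inv_cancel, map_one]; rfl)
    (by rw [← Module.End.mul_eq_comp, ← map_mul, inv_mul_cancel, map_one]; rfl)

@[simp] lemma repEquiv_apply (ρ : Representation k G V) (g : G) (x : V) :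
    repEquiv ρ g x = ρ g x := rfl

lemma conj_apply {N : Subgroup G} [N.Normal] (θ : Representation k N W) (g : G) (n : N) :
    Representation.conj N θ g n = θ ⟨g⁻¹ * n * g, by
      simpa using (MulAut.conjNormal g⁻¹ n).2⟩ := by
  have : (MulAut.conjNormal g⁻¹ n : G) = g⁻¹ * n * g := by simp
  show θ (MulAut.conjNormal g⁻¹ n) = _
  congr 1
  exact Subtype.ext this

lemma conj_conj {N : Subgroup G} [N.Normal] (θ : Representation k N W) (g g' : G) :
    Representation.conj N (Representation.conj N θ g) g' = Representation.conj N θ (g' * g) := by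
  ext n : 1
  rw [conj_apply, conj_apply, conj_apply]
  congr 1
  ext
  simp [mul_assoc]

lemma conj_one {N : Subgroup G} [N.Normal] (θ : Representation k N W) :
    Representation.conj N θ 1 = θ := by
  ext n : 1
  rw [conj_apply]
  congr 1
  ext
  simp

end Clifford

namespace RepIso

variable {k W W' : Type*} [Field k] [AddCommGroup W] [Module k W]
  [AddCommGroup W'] [Module k W'] {M : Type*} [Monoid M]

lemma refl (θ : Representation k M W) : RepIso θ θ :=
  ⟨LinearEquiv.refl k W, fun _ _ => rfl⟩

lemma symm {θ₁ : Representation k M W} {θ₂ : Representation k M W'} (h : RepIso θ₁ θ₂) :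
    RepIso θ₂ θ₁ := by
  obtain ⟨e, he⟩ := h
  exact ⟨e.symm, fun g x => by
    apply e.injective
    rw [he, e.apply_symm_apply, e.apply_symm_apply]⟩

lemma trans {V' : Type*} [AddCommGroup V'] [Module k V'] {θ₁ : Representation k M W}
    {θ₂ : Representation k M W'} {θ₃ : Representation k M V'}
    (h : RepIso θ₁ θ₂) (h' : RepIso θ₂ θ₃) : RepIso θ₁ θ₃ := by
  obtain ⟨e, he⟩ := h
  obtain ⟨e', he'⟩ := h'
  exact ⟨e.trans e', fun g x => by simp [he, he']⟩

end RepIso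

namespace Clifford

variable {k G V W W' : Type*} [Field k] [Group G] [AddCommGroup V] [Module k V]
  [AddCommGroup W] [Module k W] [AddCommGroup W'] [Module k W']

lemma repIso_conj {N : Subgroup G} [N.Normal] {θ₁ : Representation k N W}
    {θ₂ : Representation k N W'} (h : RepIso θ₁ θ₂) (g : G) :
    RepIso (Representation.conj N θ₁ g) (Representation.conj N θ₂ g) := by
  obtain ⟨e, he⟩ := h
  exact ⟨e, fun n x => by rw [conj_apply, conj_apply, he]⟩

lemma repIso_of_conj_conj {N : Subgroup G} [N.Normal] {θ₁ : Representation k N W}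
    {θ₂ : Representation k N W'} (g : G)
    (h : RepIso (Representation.conj N θ₁ g) (Representation.conj N θ₂ g)) :
    RepIso θ₁ θ₂ := by
  have := repIso_conj h g⁻¹
  rwa [conj_conj, conj_conj, inv_mul_cancel, conj_one, conj_one] at this

/-- Conjugating by an element of `N` gives an isomorphic representation. -/
lemma repIso_conj_mem {N : Subgroup G} [N.Normal] (θ : Representation k N W) (g : G)
    (hg : g ∈ N) : RepIso (Representation.conj N θ g) θ := by
  refine ⟨repEquiv θ ⟨g, hg⟩, fun n x => ?_⟩
  rw [conj_apply]
  simp only [repEquiv_apply]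
  rw [← Module.End.mul_apply, ← map_mul, ← Module.End.mul_apply, ← map_mul]
  congr 2
  ext
  simp only [Subgroup.coe_mul, MulMemClass.mk_mul_mk]
  group

end Clifford

namespace Clifford

variable {k G V W : Type*} [Field k] [Group G] [AddCommGroup V] [Module k V]
  [AddCommGroup W] [Module k W]

variable {N : Subgroup G} [N.Normal] {ρ : Representation k G V}

/-- restriction to N -/
abbrev res (ρ : Representation k G V) (N : Subgroup G) : Representation k N V :=
  ρ.comp N.subtype

lemma res_apply (n : N) (x : V) : res ρ N n x = ρ (n : G) x := rfl

lemma isSubrep_map {p : Submodule k V} (hp : (res ρ N).IsSubrep p) (g : G) :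
    (res ρ N).IsSubrep (p.map (ρ g)) := by
  intro n x hx
  rw [Submodule.mem_map] at hx ⊢
  obtain ⟨y, hy, rfl⟩ := hx
  refine ⟨res ρ N (⟨g⁻¹ * n * g, by simpa using (MulAut.conjNormal g⁻¹ n).2⟩ : N) y,
    hp _ y hy, ?_⟩
  rw [res_apply, res_apply, ← Module.End.mul_apply, ← map_mul, ← Module.End.mul_apply, ← map_mul]
  congr 2
  group

lemma map_map_rep (p : Submodule k V) (g g' : G) :
    (p.map (ρ g')).map (ρ g) = p.map (ρ (g * g')) := by
  rw [← Submodule.map_comp, ← Module.End.mul_eq_comp, ← map_mul]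

lemma map_rep_one (p : Submodule k V) : p.map (ρ (1 : G)) = p := by
  rw [map_one]; exact Submodule.map_id p

lemma map_rep_ne_bot {p : Submodule k V} (hp : p ≠ ⊥) (g : G) : p.map (ρ g) ≠ ⊥ := by
  intro h
  apply hp
  have := congrArg (Submodule.map (ρ g⁻¹)) h
  rwa [map_map_rep, inv_mul_cancel, map_rep_one, Submodule.map_bot] at this

/-- image of an irreducible subrep is irreducible -/
lemma isIrreducibleSubrep_map {p : Submodule k V} (hp : (res ρ N).IsIrreducibleSubrep p)
    (g : G) : (res ρ N).IsIrreducibleSubrep (p.map (ρ g)) := by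
  refine ⟨isSubrep_map hp.1 g, map_rep_ne_bot hp.2.1 g, fun q hq hq' => ?_⟩
  have h1 : q.map (ρ g⁻¹) ≤ p := by
    have := Submodule.map_mono (f := ρ g⁻¹) hq
    rwa [map_map_rep, inv_mul_cancel, map_rep_one] at this
  rcases hp.2.2 _ h1 (isSubrep_map hq' g⁻¹) with h | h
  · left
    have := congrArg (Submodule.map (ρ g)) h
    rwa [map_map_rep, mul_inv_cancel, map_rep_one, Submodule.map_bot] at this
  · right
    have := congrArg (Submodule.map (ρ g)) h
    rwa [map_map_rep, mul_inv_cancel, map_rep_one] at this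

/-- The subrepresentation on `p.map (ρ g)` is isomorphic to the `g`-conjugate of the
subrepresentation on `p`. -/
lemma repIso_conj_subRep_map {p : Submodule k V} (hp : (res ρ N).IsSubrep p) (g : G) :
    RepIso (Representation.conj N ((res ρ N).subRep p hp) g)
      ((res ρ N).subRep (p.map (ρ g)) (isSubrep_map hp g)) := by
  refine ⟨(repEquiv ρ g).submoduleMap p, fun n x => ?_⟩
  apply Subtype.ext
  show ρ g (ρ (((MulAut.conjNormal g⁻¹ n : N) : G)) (x : V)) = ρ (n : G) (ρ g (x : V))
  rw [MulAut.conjNormal_apply, ← Module.End.mul_apply, ← map_mul, ← Module.End.mul_apply,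
    ← map_mul]
  have : g * (g⁻¹ * (n : G) * g⁻¹⁻¹) = (n : G) * g := by group
  rw [this]

/-- Existence of an irreducible subrepresentation. -/
lemma exists_irreducibleSubrep [FiniteDimensional k V] {M : Type*} [Monoid M]
    (θ : Representation k M V) (hV : (⊥ : Submodule k V) ≠ ⊤) :
    ∃ p : Submodule k V, θ.IsIrreducibleSubrep p := by
  classical
  let S : Set ℕ := {n | ∃ p : Submodule k V, θ.IsSubrep p ∧ p ≠ ⊥ ∧ Module.finrank k p = n}
  have hS : S.Nonempty := ⟨Module.finrank k (⊤ : Submodule k V),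
    ⊤, fun _ _ _ => trivial, Ne.symm hV, rfl⟩
  obtain ⟨p, hp1, hp2, hp3⟩ : ∃ p : Submodule k V, θ.IsSubrep p ∧ p ≠ ⊥ ∧
      Module.finrank k p = sInf S := Nat.sInf_mem hS
  refine ⟨p, hp1, hp2, fun q hq hq' => ?_⟩
  by_cases hqb : q = ⊥
  · exact Or.inl hqb
  · right
    apply Submodule.eq_of_le_of_finrank_eq hq
    have h1 : Module.finrank k q ≤ Module.finrank k p := Submodule.finrank_mono hq
    have h2 : sInf S ≤ Module.finrank k q := Nat.sInf_le ⟨q, hq', hqb, rfl⟩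
    omega

end Clifford

namespace Clifford

/-- Abstract lemma: a subset of ℕ closed under addition and cancellation containing `m > 0`
has a least positive element which divides `m`. -/
lemma exists_min_period {E : Set ℕ} {m : ℕ} (hm : 0 < m) (hmE : m ∈ E)
    (hadd : ∀ a b, a ∈ E → b ∈ E → a + b ∈ E)
    (hcancel : ∀ a b, a ∈ E → a + b ∈ E → b ∈ E) :
    ∃ d : ℕ, 0 < d ∧ d ∣ m ∧ d ∈ E ∧ ∀ e, 0 < e → e < d → e ∉ E := by
  classical
  have hne : ∃ d, 0 < d ∧ d ∈ E := ⟨m, hm, hmE⟩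
  set P : ℕ → Prop := fun d => 0 < d ∧ d ∈ E with hP
  have hex : ∃ d, P d := hne
  let d := Nat.find hex
  obtain ⟨hd0, hdE⟩ : P d := Nat.find_spec hex
  have hmin : ∀ e, 0 < e → e < d → e ∉ E := fun e he hlt hE =>
    Nat.find_min hex hlt ⟨he, hE⟩
  refine ⟨d, hd0, ?_, hdE, hmin⟩
  -- multiples of d are in E
  have hmul : ∀ q : ℕ, 0 < q → q * d ∈ E := by
    intro q hq
    induction q with
    | zero => omega
    | succ n ih =>
      rcases Nat.eq_zero_or_pos n with h | h
      · simpa [h] using hdE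
      · have := hadd _ _ (ih h) hdE
        rw [Nat.succ_mul]
        exact this
  -- division with remainder
  have hdm : m % d ∈ E := by
    rcases Nat.eq_zero_or_pos (m / d) with h | h
    · have : m < d := by
        rcases Nat.lt_or_ge m d with h' | h'
        · exact h'
        · exact absurd (Nat.div_pos h' hd0) (by omega)
      rw [Nat.mod_eq_of_lt this]
      exact hmE
    · have := hcancel (m / d * d) (m % d) (hmul _ h) (by rwa [Nat.div_add_mod'] )
      exact this
  rcases Nat.eq_zero_or_pos (m % d) with h | h
  · exact Nat.dvd_of_mod_eq_zero h
  · exact absurd hdm (hmin _ h (Nat.mod_lt _ hd0))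

end Clifford

namespace Clifford

variable {k G V : Type*} [Field k] [Group G] [AddCommGroup V] [Module k V]
  {N : Subgroup G} [N.Normal] {ρ : Representation k G V}

lemma subRep_coe {p : Submodule k V} (hp : (res ρ N).IsSubrep p) (n : N) (x : p) :
    ((((res ρ N).subRep p hp) n x : p) : V) = ρ (n : G) (x : V) := rfl

/-- Key step: if the `τ`-conjugate of an irreducible subrep `A₀` is isomorphic to it,
then there is an irreducible subrep `A` isomorphic to `A₀` with `A.map (ρ τ) = A`. -/
lemma exists_stable_irreducibleSubrep [IsAlgClosed k] [FiniteDimensional k V]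
    {A₀ : Submodule k V} (hA₀ : (res ρ N).IsIrreducibleSubrep A₀) (τ : G)
    (hiso : RepIso (Representation.conj N ((res ρ N).subRep A₀ hA₀.1) τ)
      ((res ρ N).subRep A₀ hA₀.1)) :
    ∃ (A : Submodule k V) (hA : (res ρ N).IsIrreducibleSubrep A),
      A.map (ρ τ) = A ∧ RepIso ((res ρ N).subRep A₀ hA₀.1) ((res ρ N).subRep A hA.1) := by
  classical
  set θ := (res ρ N).subRep A₀ hA₀.1 with hθ
  obtain ⟨e, he⟩ := hiso
  -- e' intertwines θ and conj θ τ
  set e' := e.symm with he'def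
  have he' : ∀ (n : N) (x : A₀), e' (θ n x) = (Representation.conj N θ τ) n (e' x) := by
    intro n x
    apply e.injective
    rw [he, e.apply_symm_apply, e.apply_symm_apply]
  -- the space of N-equivariant maps A₀ → V
  set H : Submodule k (A₀ →ₗ[k] V) :=
    { carrier := {f | ∀ (n : N) (a : A₀), f (θ n a) = ρ (n : G) (f a)}
      add_mem' := by
        intro f g hf hg n a
        simp only [LinearMap.add_apply, map_add]
        rw [hf n a, hg n a]
      zero_mem' := by intro n a; simp
      smul_mem' := by
        intro c f hf n a
        simp only [LinearMap.smul_apply, map_smul]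
        rw [hf n a] } with hH
  have hmemH : ∀ f : A₀ →ₗ[k] V, f ∈ H ↔ ∀ (n : N) (a : A₀), f (θ n a) = ρ (n : G) (f a) :=
    fun f => Iff.rfl
  -- the inclusion is a nonzero element of H
  have hincl : A₀.subtype ∈ H := by
    intro n a
    rw [Submodule.subtype_apply, Submodule.subtype_apply, subRep_coe]
  have hinclne : (⟨A₀.subtype, hincl⟩ : H) ≠ 0 := by
    intro h
    obtain ⟨x, hx⟩ := Submodule.exists_mem_ne_zero_of_ne_bot hA₀.2.1
    have := congrArg (fun f : H => (f : A₀ →ₗ[k] V) ⟨x, hx.1⟩) h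
    simp only [Submodule.subtype_apply, ZeroMemClass.coe_zero, LinearMap.zero_apply] at this
    exact hx.2 (by exact_mod_cast this)
  haveI : Nontrivial H := ⟨⟨_, 0, hinclne⟩⟩
  -- the twisting operator S on H
  have hSmem : ∀ f ∈ H, (ρ τ) ∘ₗ (f ∘ₗ (e' : A₀ →ₗ[k] A₀)) ∈ H := by
    intro f hf n a
    simp only [LinearMap.comp_apply, LinearEquiv.coe_coe]
    rw [he', conj_apply, hf]
    rw [← Module.End.mul_apply, ← map_mul, ← Module.End.mul_apply, ← map_mul]
    congr 2
    group
  set S : Module.End k H := {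
    toFun := fun f => ⟨(ρ τ) ∘ₗ ((f : A₀ →ₗ[k] V) ∘ₗ (e' : A₀ →ₗ[k] A₀)), hSmem f f.2⟩
    map_add' := by
      intro f g
      apply Subtype.ext
      simp only [Submodule.coe_add, LinearMap.add_comp, LinearMap.comp_add, map_add]
    map_smul' := by
      intro c f
      apply Subtype.ext
      simp only [SetLike.val_smul, LinearMap.smul_comp, LinearMap.comp_smul, map_smul,
        RingHom.id_apply] } with hS
  obtain ⟨c, hc⟩ := Module.End.exists_eigenvalue S
  obtain ⟨f₀, hf₀⟩ := hc.exists_hasEigenvector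
  have hf₀ne : f₀ ≠ 0 := hf₀.2
  have hf₀eq : (ρ τ) ∘ₗ ((f₀ : A₀ →ₗ[k] V) ∘ₗ (e' : A₀ →ₗ[k] A₀)) = c • (f₀ : A₀ →ₗ[k] V) := by
    have := hf₀.1
    rw [Module.End.mem_eigenspace_iff] at this
    exact congrArg Subtype.val this
  set f : A₀ →ₗ[k] V := (f₀ : A₀ →ₗ[k] V) with hf
  have hfH : ∀ (n : N) (a : A₀), f (θ n a) = ρ (n : G) (f a) := f₀.2
  have hfne : f ≠ 0 := fun h => hf₀ne (Subtype.ext h)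
  have hkey : ∀ a : A₀, ρ τ (f (e' a)) = c • f a := fun a => congrArg (fun F => F a) hf₀eq
  have hcne : c ≠ 0 := by
    intro h
    apply hfne
    ext a
    have := hkey (e'.symm a)
    rw [h, zero_smul, LinearEquiv.apply_symm_apply] at this
    have h2 : f a = ρ τ⁻¹ (ρ τ (f a)) := by
      rw [← Module.End.mul_apply, ← map_mul, inv_mul_cancel, map_one, Module.End.one_apply]
    rw [h2, this, map_zero]
    rfl
  -- A := range f
  set A : Submodule k V := LinearMap.range f with hA
  have hAsub : (res ρ N).IsSubrep A := by
    rintro n x ⟨a, rfl⟩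
    exact ⟨θ n a, by rw [hfH n a]; rfl⟩
  have hfinj : Function.Injective f := by
    rw [← LinearMap.ker_eq_bot]
    by_contra hker
    have hq : (res ρ N).IsSubrep ((LinearMap.ker f).map A₀.subtype) := by
      rintro n x ⟨a, ha, rfl⟩
      simp only [SetLike.mem_coe, LinearMap.mem_ker] at ha
      refine ⟨θ n a, ?_, ?_⟩
      · show θ n a ∈ LinearMap.ker f
        rw [LinearMap.mem_ker, hfH, ha, map_zero]
      · rw [Submodule.subtype_apply, subRep_coe]
        rfl
    rcases hA₀.2.2 _ (Submodule.map_subtype_le _ _) hq with h | h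
    · apply hker
      have := Submodule.map_injective_of_injective (Submodule.injective_subtype A₀)
        (h.trans (Submodule.map_bot A₀.subtype).symm)
      exact this
    · apply hfne
      ext a
      have haa : (a : V) ∈ (LinearMap.ker f).map A₀.subtype := by rw [h]; exact a.2
      obtain ⟨b, hb, hba⟩ := haa
      have hb' : b = a := Subtype.ext hba
      rw [← hb']
      simpa using hb
  have hAne : A ≠ ⊥ := by
    intro h
    apply hfne
    ext a
    have : f a ∈ A := ⟨a, rfl⟩
    rw [h, Submodule.mem_bot] at this
    simpa using this
  have hAstab : A.map (ρ τ) = A := by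
    apply le_antisymm
    · rintro x ⟨y, ⟨a, rfl⟩, rfl⟩
      have := hkey (e'.symm a)
      rw [LinearEquiv.apply_symm_apply] at this
      rw [this]
      exact ⟨c • e'.symm a, by rw [map_smul]⟩
    · rintro x ⟨a, rfl⟩
      refine ⟨f (e' (c⁻¹ • a)), ⟨_, rfl⟩, ?_⟩
      rw [map_smul, map_smul, map_smul, hkey, smul_smul, inv_mul_cancel₀ hcne, one_smul]
  have hAirr : (res ρ N).IsIrreducibleSubrep A := by
    refine ⟨hAsub, hAne, fun q hq hq' => ?_⟩
    have hq'' : (res ρ N).IsSubrep ((q.comap f).map A₀.subtype) := by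
      rintro n x ⟨a, ha, rfl⟩
      simp only [SetLike.mem_coe, Submodule.mem_comap] at ha
      refine ⟨θ n a, ?_, ?_⟩
      · show θ n a ∈ q.comap f
        rw [Submodule.mem_comap, hfH]
        exact hq' n _ ha
      · rw [Submodule.subtype_apply, subRep_coe]
        rfl
    rcases hA₀.2.2 _ (Submodule.map_subtype_le _ _) hq'' with h | h
    · left
      have h' := Submodule.map_injective_of_injective (Submodule.injective_subtype A₀)
        (h.trans (Submodule.map_bot A₀.subtype).symm)
      rw [eq_bot_iff]
      intro x hx
      obtain ⟨a, rfl⟩ := hq hx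
      have haq : a ∈ q.comap f := Submodule.mem_comap.2 hx
      rw [h', Submodule.mem_bot] at haq
      simp [haq]
    · right
      apply le_antisymm hq
      rintro x ⟨a, rfl⟩
      have haa : (a : V) ∈ (q.comap f).map A₀.subtype := by rw [h]; exact a.2
      obtain ⟨b, hb, hba⟩ := haa
      have hba' : b = a := Subtype.ext hba
      rw [← hba']
      exact Submodule.mem_comap.1 hb
  refine ⟨A, hAirr, hAstab, ?_⟩
  refine ⟨LinearEquiv.ofInjective f hfinj, fun n a => ?_⟩
  apply Subtype.ext
  show f (θ n a) = ρ (n : G) (f a)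
  exact hfH n a

end Clifford

namespace Clifford

variable {k G V : Type*} [Field k] [Group G] [AddCommGroup V] [Module k V]
  {N : Subgroup G} [N.Normal] {ρ : Representation k G V}

lemma isSubrep_sup {p q : Submodule k V} (hp : (res ρ N).IsSubrep p)
    (hq : (res ρ N).IsSubrep q) : (res ρ N).IsSubrep (p ⊔ q) := by
  intro n x hx
  rw [Submodule.mem_sup] at hx ⊢
  obtain ⟨y, hy, z, hz, rfl⟩ := hx
  exact ⟨res ρ N n y, hp n y hy, res ρ N n z, hq n z hz, (map_add _ _ _).symm⟩

lemma isSubrep_bot : (res ρ N).IsSubrep (⊥ : Submodule k V) := by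
  intro n x hx
  rw [Submodule.mem_bot] at hx ⊢
  rw [hx, map_zero]

lemma isSubrep_inf {p q : Submodule k V} (hp : (res ρ N).IsSubrep p)
    (hq : (res ρ N).IsSubrep q) : (res ρ N).IsSubrep (p ⊓ q) := by
  intro n x hx
  exact ⟨hp n x hx.1, hq n x hx.2⟩

lemma isSubrep_finsetSup {ι : Type*} (J : Finset ι) (C : ι → Submodule k V)
    (hC : ∀ j ∈ J, (res ρ N).IsSubrep (C j)) : (res ρ N).IsSubrep (J.sup C) := by
  classical
  induction J using Finset.induction_on with
  | empty => simpa using isSubrep_bot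
  | insert _ _ hj ih =>
    rw [Finset.sup_insert]
    exact isSubrep_sup (hC _ (Finset.mem_insert_self _ _))
      (ih fun j hji => hC j (Finset.mem_insert_of_mem hji))

/-- A simple subrep contained in `C ⊔ D` and meeting `D` trivially, where `C` is simple and
meets `D` trivially, is isomorphic to `C`. -/
lemma repIso_of_le_sup_disjoint [FiniteDimensional k V] {B C D : Submodule k V}
    (hB : (res ρ N).IsIrreducibleSubrep B) (hC : (res ρ N).IsIrreducibleSubrep C)
    (hD : (res ρ N).IsSubrep D) (hle : B ≤ C ⊔ D) (hBD : B ⊓ D = ⊥) (hCD : C ⊓ D = ⊥) :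
    RepIso ((res ρ N).subRep B hB.1) ((res ρ N).subRep C hC.1) := by
  classical
  obtain ⟨D'', hD''⟩ := Submodule.exists_isCompl (C ⊔ D)
  have hcompl : IsCompl C (D ⊔ D'') := by
    constructor
    · rw [disjoint_iff]
      have h1 : C ⊓ (D ⊔ D'') ≤ (C ⊔ D) ⊓ (D ⊔ D'') := by
        exact inf_le_inf_right _ le_sup_left
      have h2 : (C ⊔ D) ⊓ (D ⊔ D'') = D := by
        rw [inf_comm, sup_inf_assoc_of_le _ (le_sup_right : D ≤ C ⊔ D)]
        have : D'' ⊓ (C ⊔ D) = ⊥ := disjoint_iff.1 hD''.1.symm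
        rw [this, sup_bot_eq]
      rw [h2] at h1
      have : C ⊓ (D ⊔ D'') ≤ C ⊓ D := le_inf inf_le_left h1
      rw [hCD] at this
      exact le_bot_iff.1 this
    · rw [codisjoint_iff]
      rw [← sup_assoc]
      exact codisjoint_iff.1 hD''.2
  set π := Submodule.projectionOnto C (D ⊔ D'') hcompl with hπ
  -- equivariance of π on C ⊔ D
  have hπequiv : ∀ (n : N), ∀ x ∈ C ⊔ D, (π ((res ρ N) n x) : V) = (res ρ N) n (π x : V) := by
    intro n x hx
    obtain ⟨c, hc, d, hd, rfl⟩ := Submodule.mem_sup.1 hx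
    have hρc : (res ρ N) n c ∈ C := hC.1 n c hc
    have hρd : (res ρ N) n d ∈ D := hD n d hd
    have e1 : π d = 0 :=
      Submodule.projectionOnto_apply_of_mem_right hcompl (Submodule.mem_sup_left hd)
    have e2 : π ((res ρ N) n d) = 0 :=
      Submodule.projectionOnto_apply_of_mem_right hcompl (Submodule.mem_sup_left hρd)
    have e3 : π c = ⟨c, hc⟩ := Submodule.projectionOnto_apply_left hcompl ⟨c, hc⟩
    have e4 : π ((res ρ N) n c) = ⟨_, hρc⟩ :=
      Submodule.projectionOnto_apply_left hcompl ⟨_, hρc⟩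
    rw [map_add (res ρ N n) c d, map_add π, map_add π, e1, e2, e3, e4, add_zero, add_zero]
  -- the equivariant map B → C
  set φ : B →ₗ[k] C := π ∘ₗ B.subtype with hφ
  have hφequiv : ∀ (n : N) (b : B),
      φ (((res ρ N).subRep B hB.1) n b) = ((res ρ N).subRep C hC.1) n (φ b) := by
    intro n b
    apply Subtype.ext
    show (π ((((res ρ N).subRep B hB.1) n b : B) : V) : V) = (res ρ N) n (π (b : V) : V)
    have : ((((res ρ N).subRep B hB.1) n b : B) : V) = (res ρ N) n (b : V) := rfl
    rw [this, hπequiv n _ (hle b.2)]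
  have hφinj : Function.Injective φ := by
    rw [← LinearMap.ker_eq_bot, eq_bot_iff]
    intro b hb
    rw [LinearMap.mem_ker] at hb
    have h1 : (b : V) ∈ D ⊔ D'' := by
      have : π (b : V) = 0 := hb
      rwa [Submodule.projectionOnto_apply_eq_zero_iff] at this
    have h2 : (b : V) ∈ (C ⊔ D) ⊓ (D ⊔ D'') := ⟨hle b.2, h1⟩
    have h3 : (C ⊔ D) ⊓ (D ⊔ D'') = D := by
      rw [inf_comm, sup_inf_assoc_of_le _ (le_sup_right : D ≤ C ⊔ D)]
      have : D'' ⊓ (C ⊔ D) = ⊥ := disjoint_iff.1 hD''.1.symm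
      rw [this, sup_bot_eq]
    rw [h3] at h2
    have : (b : V) ∈ B ⊓ D := ⟨b.2, h2⟩
    rw [hBD, Submodule.mem_bot] at this
    exact (Submodule.mem_bot k).2 (Subtype.ext this)
  -- surjectivity via irreducibility of C
  have hrange : LinearMap.range (C.subtype ∘ₗ φ) = C := by
    have hsub : (res ρ N).IsSubrep (LinearMap.range (C.subtype ∘ₗ φ)) := by
      rintro n x ⟨b, rfl⟩
      refine ⟨((res ρ N).subRep B hB.1) n b, ?_⟩
      show ((φ (((res ρ N).subRep B hB.1) n b) : C) : V) = (res ρ N) n ((φ b : C) : V)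
      rw [hφequiv]
      rfl
    have hlerange : LinearMap.range (C.subtype ∘ₗ φ) ≤ C := by
      rintro x ⟨b, rfl⟩
      exact (φ b).2
    rcases hC.2.2 _ hlerange hsub with h | h
    · exfalso
      apply hB.2.1
      rw [eq_bot_iff]
      intro b hb
      have : (C.subtype ∘ₗ φ) ⟨b, hb⟩ ∈ (⊥ : Submodule k V) := by
        rw [← h]; exact ⟨⟨b, hb⟩, rfl⟩
      rw [Submodule.mem_bot] at this
      have : φ ⟨b, hb⟩ = 0 := Subtype.ext this
      have := hφinj (this.trans (map_zero φ).symm)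
      rw [Submodule.mem_bot]
      exact congrArg Subtype.val this
    · exact h
  have hφsurj : Function.Surjective φ := by
    intro c
    have : (c : V) ∈ LinearMap.range (C.subtype ∘ₗ φ) := by rw [hrange]; exact c.2
    obtain ⟨b, hb⟩ := this
    exact ⟨b, Subtype.ext hb⟩
  exact ⟨LinearEquiv.ofBijective φ ⟨hφinj, hφsurj⟩, hφequiv⟩

/-- A simple subrep contained in a finite sup of simple subreps is isomorphic to one of them. -/
lemma repIso_of_le_finsetSup [FiniteDimensional k V] {ι : Type*} (J : Finset ι)
    (C : ι → Submodule k V) (hC : ∀ j ∈ J, (res ρ N).IsIrreducibleSubrep (C j))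
    {B : Submodule k V} (hB : (res ρ N).IsIrreducibleSubrep B) (hle : B ≤ J.sup C) :
    ∃ j ∈ J, ∃ (h : (res ρ N).IsIrreducibleSubrep (C j)),
      RepIso ((res ρ N).subRep B hB.1) ((res ρ N).subRep (C j) h.1) := by
  classical
  induction J using Finset.induction_on with
  | empty =>
    exfalso
    apply hB.2.1
    rw [eq_bot_iff]
    simpa using hle
  | @insert j₀ J hj ih =>
    rw [Finset.sup_insert] at hle
    set D := J.sup C with hD
    have hDsub : (res ρ N).IsSubrep D :=
      isSubrep_finsetSup J C fun j hji => (hC j (Finset.mem_insert_of_mem hji)).1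
    have hBD : (res ρ N).IsSubrep (B ⊓ D) := isSubrep_inf hB.1 hDsub
    rcases hB.2.2 _ inf_le_left hBD with h | h
    · -- B ⊓ D = ⊥
      have hCj₀ := hC j₀ (Finset.mem_insert_self _ _)
      have hCjD : (res ρ N).IsSubrep (C j₀ ⊓ D) := isSubrep_inf hCj₀.1 hDsub
      rcases hCj₀.2.2 _ inf_le_left hCjD with h' | h'
      · refine ⟨j₀, Finset.mem_insert_self _ _, hCj₀,
          repIso_of_le_sup_disjoint hB hCj₀ hDsub hle h h'⟩
      · exfalso
        have hCle : C j₀ ≤ D := by rw [← h']; exact inf_le_right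
        have hBleD : B ≤ D := hle.trans (sup_le hCle le_rfl)
        apply hB.2.1
        rw [← h]
        exact (inf_eq_left.2 hBleD).symm
    · -- B ≤ D
      have hBle : B ≤ D := by rw [← h]; exact inf_le_right
      obtain ⟨j, hjJ, hj', hiso⟩ := ih (fun j hji => hC j (Finset.mem_insert_of_mem hji)) hBle
      exact ⟨j, Finset.mem_insert_of_mem hjJ, hj', hiso⟩

end Clifford

namespace Clifford

variable {k G V W : Type*} [Field k] [Group G] [AddCommGroup V] [Module k V]
  [AddCommGroup W] [Module k W]

lemma conj_pow_add {N : Subgroup G} [N.Normal] (θ : Representation k N W) (σ : G) (a b : ℕ) :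
    Representation.conj N θ (σ ^ (a + b)) =
      Representation.conj N (Representation.conj N θ (σ ^ a)) (σ ^ b) := by
  rw [conj_conj, ← pow_add, Nat.add_comm b a]

end Clifford

open Clifford in
/-- Multiplicity-one Clifford decomposition for a cyclic quotient: if `G/N` is finite cyclic of
order `m`, generated by the image of `σ`, and `V` is a finite-dimensional irreducible
representation of `G` over an algebraically closed field of characteristic `0`, then there are a
positive divisor `N'` of `m` and an irreducible `N`-subrepresentation `A` of `Res_N V` such that
the conjugates `A^{σ^i}`, `0 ≤ i < N'`, are pairwise non-isomorphic, `A^{σ^{N'}} ≅ A`,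
`Res_N V ≅ ⊕_{i=0}^{N'-1} A^{σ^i}`, and `dim V = N' * dim A`. -/
theorem clifford_cyclic_decomposition
    {k G V : Type*} [Field k] [IsAlgClosed k] [CharZero k] [Group G]
    [AddCommGroup V] [Module k V] [FiniteDimensional k V]
    (N : Subgroup G) [N.Normal] (m : ℕ) (hm : 0 < m)
    (hcard : Nat.card (G ⧸ N) = m) (σ : G)
    (hgen : Subgroup.zpowers (QuotientGroup.mk σ : G ⧸ N) = ⊤)
    (ρ : Representation k G V) (hρ : ρ.IsIrreducibleRep) :
    ∃ N' : ℕ, 0 < N' ∧ N' ∣ m ∧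
      ∃ (A : Submodule k V) (hA : Representation.IsIrreducibleSubrep (ρ.comp N.subtype) A),
        (∀ i j : Fin N', i ≠ j →
          ¬ RepIso
            (Representation.conj N
              (Representation.subRep (ρ.comp N.subtype) A hA.1) (σ ^ (i : ℕ)))
            (Representation.conj N
              (Representation.subRep (ρ.comp N.subtype) A hA.1) (σ ^ (j : ℕ)))) ∧
        RepIso
          (Representation.conj N
            (Representation.subRep (ρ.comp N.subtype) A hA.1) (σ ^ N'))
          (Representation.subRep (ρ.comp N.subtype) A hA.1) ∧
        RepIso (ρ.comp N.subtype)
          (dirSumRep fun i : Fin N' =>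
            Representation.conj N
              (Representation.subRep (ρ.comp N.subtype) A hA.1) (σ ^ (i : ℕ))) ∧
        Module.finrank k V = N' * Module.finrank k A := by
  classical
  haveI : Finite (G ⧸ N) := Nat.finite_of_card_ne_zero (by rw [hcard]; omega)
  have σm_mem : σ ^ m ∈ N := by
    rw [← QuotientGroup.eq_one_iff, QuotientGroup.mk_pow, ← hcard]
    exact pow_card_eq_one'
  -- an irreducible N-subrep
  obtain ⟨A₀, hA₀⟩ := exists_irreducibleSubrep (res ρ N) hρ.1
  set θ₀ := (res ρ N).subRep A₀ hA₀.1 with hθ₀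
  -- the period set
  set E : Set ℕ := {d : ℕ | RepIso (Representation.conj N θ₀ (σ ^ d)) θ₀} with hE
  have hmE : m ∈ E := repIso_conj_mem θ₀ (σ ^ m) σm_mem
  have hadd : ∀ a b, a ∈ E → b ∈ E → a + b ∈ E := by
    intro a b ha hb
    show RepIso (Representation.conj N θ₀ (σ ^ (a + b))) θ₀
    rw [conj_pow_add]
    exact (repIso_conj ha (σ ^ b)).trans hb
  have hcancel : ∀ a b, a ∈ E → a + b ∈ E → b ∈ E := by
    intro a b ha hab
    have h1 : Representation.conj N θ₀ (σ ^ (a + b)) =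
        Representation.conj N (Representation.conj N θ₀ (σ ^ b)) (σ ^ a) := by
      rw [Nat.add_comm a b, conj_pow_add]
    have hab' : RepIso (Representation.conj N
        (Representation.conj N θ₀ (σ ^ b)) (σ ^ a)) θ₀ := h1 ▸ hab
    have ha' : RepIso (Representation.conj N θ₀ (σ ^ a)) θ₀ := ha
    exact repIso_of_conj_conj (σ ^ a) (hab'.trans ha'.symm)
  obtain ⟨N', hN'0, hN'dvd, hN'E, hN'min⟩ := exists_min_period hm hmE hadd hcancel
  -- replace A₀ by an A stable under ρ (σ ^ N')
  obtain ⟨A, hAirr, hAstab, hiso₀A⟩ :=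
    exists_stable_irreducibleSubrep hA₀ (σ ^ N') hN'E
  set θA := (res ρ N).subRep A hAirr.1 with hθA
  -- transfer of the period set
  have hEA : ∀ d : ℕ, RepIso (Representation.conj N θA (σ ^ d)) θA → d ∈ E := by
    intro d h
    show RepIso (Representation.conj N θ₀ (σ ^ d)) θ₀
    exact ((repIso_conj hiso₀A (σ ^ d)).trans h).trans hiso₀A.symm
  have hEA' : ∀ d : ℕ, d ∈ E → RepIso (Representation.conj N θA (σ ^ d)) θA := by
    intro d h
    exact ((repIso_conj hiso₀A.symm (σ ^ d)).trans h).trans hiso₀A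
  -- pairwise non-isomorphism
  have hlt : ∀ i j : Fin N', (i : ℕ) < (j : ℕ) →
      ¬ RepIso (Representation.conj N θA (σ ^ (i : ℕ)))
        (Representation.conj N θA (σ ^ (j : ℕ))) := by
    intro i j hij hiso
    set d := (j : ℕ) - (i : ℕ) with hd
    have hd0 : 0 < d := by omega
    have hdN : d < N' := by omega
    have h2 : Representation.conj N θA (σ ^ (j : ℕ)) =
        Representation.conj N (Representation.conj N θA (σ ^ d)) (σ ^ (i : ℕ)) := by
      rw [← conj_pow_add]
      congr 2
      omega
    rw [h2] at hiso
    have h3 : RepIso θA (Representation.conj N θA (σ ^ d)) :=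
      repIso_of_conj_conj (σ ^ (i : ℕ)) hiso
    exact hN'min d hd0 hdN (hEA d h3.symm)
  have hdistinct : ∀ i j : Fin N', i ≠ j →
      ¬ RepIso (Representation.conj N θA (σ ^ (i : ℕ)))
        (Representation.conj N θA (σ ^ (j : ℕ))) := by
    intro i j hij hiso
    rcases Nat.lt_or_ge (i : ℕ) (j : ℕ) with h | h
    · exact hlt i j h hiso
    · have : (j : ℕ) < (i : ℕ) := by
        rcases Nat.lt_or_ge (j : ℕ) (i : ℕ) with h' | h'
        · exact h'
        · exact absurd (Fin.ext (by omega)) hij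
      exact hlt j i this hiso.symm
  -- the family of conjugate submodules
  set B : Fin N' → Submodule k V := fun i => A.map (ρ (σ ^ (i : ℕ))) with hB
  have hBirr : ∀ i : Fin N', (res ρ N).IsIrreducibleSubrep (B i) := fun i =>
    isIrreducibleSubrep_map hAirr (σ ^ (i : ℕ))
  have hBiso : ∀ i : Fin N',
      RepIso (Representation.conj N θA (σ ^ (i : ℕ)))
        ((res ρ N).subRep (B i) (hBirr i).1) := by
    intro i
    obtain ⟨e, he⟩ := repIso_conj_subRep_map hAirr.1 (σ ^ (i : ℕ))
    exact ⟨e, he⟩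
  have hB0 : B ⟨0, hN'0⟩ = A := by
    show A.map (ρ (σ ^ (0 : ℕ))) = A
    rw [pow_zero, map_rep_one]
  -- the sup is G-stable, hence ⊤
  set S : Submodule k V := Finset.univ.sup B with hS
  have hSsub : (res ρ N).IsSubrep S :=
    isSubrep_finsetSup Finset.univ B fun i _ => (hBirr i).1
  have hmap_sup : ∀ (g : G) (J : Finset (Fin N')),
      Submodule.map (ρ g) (J.sup B) = J.sup fun i => Submodule.map (ρ g) (B i) := by
    intro g J
    induction J using Finset.induction_on with
    | empty => simp
    | @insert j J hj ih => rw [Finset.sup_insert, Finset.sup_insert, Submodule.map_sup, ih]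
  have hmapB : ∀ i : Fin N', Submodule.map (ρ σ) (B i) = A.map (ρ (σ ^ ((i : ℕ) + 1))) := by
    intro i
    rw [hB, map_map_rep, ← pow_succ']
  have hSσ : Submodule.map (ρ σ) S = S := by
    apply le_antisymm
    · rw [hmap_sup]
      apply Finset.sup_le
      intro i _
      rw [hmapB]
      rcases Nat.lt_or_ge ((i : ℕ) + 1) N' with h | h
      · have : A.map (ρ (σ ^ ((i : ℕ) + 1))) = B ⟨(i : ℕ) + 1, h⟩ := rfl
        rw [this]
        exact Finset.le_sup (Finset.mem_univ _)
      · have hi : (i : ℕ) + 1 = N' := by omega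
        rw [hi, hAstab]
        rw [← hB0]
        exact Finset.le_sup (Finset.mem_univ _)
    · apply Finset.sup_le
      intro i _
      rcases Nat.eq_zero_or_pos (i : ℕ) with h | h
      · have hBi : B i = A := by
          rw [← hB0]
          congr 1
          exact Fin.ext (by simp [h])
        rw [hBi, ← hAstab]
        have hN'eq : N' = (N' - 1) + 1 := by omega
        have : A.map (ρ (σ ^ N')) =
            Submodule.map (ρ σ) (A.map (ρ (σ ^ (N' - 1)))) := by
          rw [map_map_rep, ← pow_succ', ← hN'eq]
        rw [this]
        have h2 : A.map (ρ (σ ^ (N' - 1))) = B ⟨N' - 1, by omega⟩ := rfl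
        rw [h2]
        exact Submodule.map_mono (Finset.le_sup (Finset.mem_univ _))
      · have : B i = Submodule.map (ρ σ) (B ⟨(i : ℕ) - 1, by have := i.isLt; omega⟩) := by
          rw [hmapB]
          show A.map (ρ (σ ^ (i : ℕ))) = A.map (ρ (σ ^ (((i : ℕ) - 1) + 1)))
          have h3 : (i : ℕ) = ((i : ℕ) - 1) + 1 := by omega
          rw [← h3]

        rw [this]
        exact Submodule.map_mono (Finset.le_sup (Finset.mem_univ _))
  have hstab_of_subrep : ∀ (p : Submodule k V), (res ρ N).IsSubrep p →
      ∀ n : N, Submodule.map (ρ (n : G)) p = p := by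
    intro p hp n
    apply le_antisymm
    · rintro x ⟨y, hy, rfl⟩
      exact hp n y hy
    · intro x hx
      refine ⟨ρ ((n⁻¹ : N) : G) x, hp n⁻¹ x hx, ?_⟩
      rw [← Module.End.mul_apply, ← map_mul]
      have h1 : (n : G) * ((n⁻¹ : N) : G) = 1 := by
        rw [← Subgroup.coe_mul, mul_inv_cancel, Subgroup.coe_one]
      rw [h1, map_one, Module.End.one_apply]
  set St : Subgroup G := {
    carrier := {g | Submodule.map (ρ g) S = S}
    one_mem' := map_rep_one S
    mul_mem' := by
      intro a b ha hb
      show Submodule.map (ρ (a * b)) S = S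
      rw [← map_map_rep]
      rw [show Submodule.map (ρ b) S = S from hb]
      exact ha
    inv_mem' := by
      intro a ha
      show Submodule.map (ρ a⁻¹) S = S
      have h2 : Submodule.map (ρ a⁻¹) (Submodule.map (ρ a) S) = S := by
        rw [map_map_rep, inv_mul_cancel, map_rep_one]
      rw [show Submodule.map (ρ a) S = S from ha] at h2
      exact h2 } with hSt
  have hσSt : σ ∈ St := hSσ
  have hNSt : ∀ n : G, n ∈ N → n ∈ St := by
    intro n hn
    exact hstab_of_subrep S hSsub ⟨n, hn⟩
  have hStall : ∀ g : G, g ∈ St := by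
    intro g
    have hmem : (QuotientGroup.mk g : G ⧸ N) ∈ Subgroup.zpowers (QuotientGroup.mk σ : G ⧸ N) := by
      rw [hgen]; trivial
    obtain ⟨a, ha⟩ := Subgroup.mem_zpowers_iff.1 hmem
    have hza : σ ^ a ∈ St := Subgroup.zpow_mem St hσSt a
    have hn : (σ ^ a)⁻¹ * g ∈ N := by
      rw [← QuotientGroup.eq_one_iff, QuotientGroup.mk_mul, QuotientGroup.mk_inv,
        QuotientGroup.mk_zpow, ha, inv_mul_cancel]
    have : g = σ ^ a * ((σ ^ a)⁻¹ * g) := by group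
    rw [this]
    exact Subgroup.mul_mem St hza (hNSt _ hn)
  have hSG : ρ.IsSubrep S := by
    intro g x hx
    have : ρ g x ∈ Submodule.map (ρ g) S := ⟨x, hx, rfl⟩
    rwa [show Submodule.map (ρ g) S = S from hStall g] at this
  have hStop : S = ⊤ := by
    rcases hρ.2 S hSG with h | h
    · exfalso
      apply hAirr.2.1
      rw [eq_bot_iff, ← h, ← hB0]
      exact Finset.le_sup (Finset.mem_univ _)
    · exact h
  -- independence
  have hdisj : ∀ i : Fin N', B i ⊓ (Finset.univ.erase i).sup B = ⊥ := by
    intro i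
    have hsubrep : (res ρ N).IsSubrep (B i ⊓ (Finset.univ.erase i).sup B) :=
      isSubrep_inf (hBirr i).1
        (isSubrep_finsetSup _ B fun j _ => (hBirr j).1)
    rcases (hBirr i).2.2 _ inf_le_left hsubrep with h | h
    · exact h
    · exfalso
      have hle : B i ≤ (Finset.univ.erase i).sup B := by
        rw [← h]; exact inf_le_right
      obtain ⟨j, hjmem, hj', hiso⟩ := repIso_of_le_finsetSup (Finset.univ.erase i) B
        (fun j _ => hBirr j) (hBirr i) hle
      have hji : j ≠ i := Finset.ne_of_mem_erase hjmem
      have hiso2 : RepIso (Representation.conj N θA (σ ^ (i : ℕ)))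
          (Representation.conj N θA (σ ^ (j : ℕ))) := by
        refine ((hBiso i).trans hiso).trans ?_
        have heq2 : ((res ρ N).subRep (B j) hj'.1) = ((res ρ N).subRep (B j) (hBirr j).1) := rfl
        rw [heq2]
        exact (hBiso j).symm
      exact hdistinct i j (Ne.symm hji) hiso2
  -- the direct sum isomorphism
  set θs : Fin N' → Representation k N A :=
    fun i => Representation.conj N θA (σ ^ (i : ℕ)) with hθs
  set Φ : (∀ _ : Fin N', A) →ₗ[k] V :=
    ∑ i : Fin N', ((ρ (σ ^ (i : ℕ))) ∘ₗ A.subtype) ∘ₗ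
      (LinearMap.proj i : (∀ _ : Fin N', A) →ₗ[k] A) with hΦ
  have hΦapply : ∀ a : ∀ _ : Fin N', A,
      Φ a = ∑ i : Fin N', ρ (σ ^ (i : ℕ)) ((a i : A) : V) := by
    intro a
    rw [hΦ, LinearMap.sum_apply]
    rfl
  have hcoe : ∀ (i : ℕ) (n : N) (x : A),
      ((Representation.conj N θA (σ ^ i) n x : A) : V) =
        ρ ((σ ^ i)⁻¹ * (n : G) * σ ^ i) ((x : A) : V) := by
    intro i n x
    rw [conj_apply]
    rfl
  have hΦequiv : ∀ (n : N) (a : ∀ _ : Fin N', A),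
      Φ (dirSumRep θs n a) = (res ρ N) n (Φ a) := by
    intro n a
    rw [hΦapply, hΦapply, map_sum]
    apply Finset.sum_congr rfl
    intro i _
    have h1 : ((dirSumRep θs n a) i : V) = ((θs i n (a i) : A) : V) := rfl
    rw [h1, hθs, hcoe]
    rw [← Module.End.mul_apply, ← map_mul, res_apply, ← Module.End.mul_apply, ← map_mul]
    congr 2
    group
  have hΦsurj : Function.Surjective Φ := by
    rw [← LinearMap.range_eq_top]
    rw [eq_top_iff, ← hStop]
    apply Finset.sup_le
    rintro i _ x ⟨y, hy, rfl⟩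
    refine ⟨Pi.single i ⟨y, hy⟩, ?_⟩
    rw [hΦapply]
    rw [Finset.sum_eq_single i]
    · rw [Pi.single_eq_same]
    · intro j _ hji
      rw [Pi.single_eq_of_ne hji]
      simp
    · intro h
      exact absurd (Finset.mem_univ i) h
  have hΦinj : Function.Injective Φ := by
    rw [← LinearMap.ker_eq_bot, eq_bot_iff]
    intro a ha
    rw [LinearMap.mem_ker, hΦapply] at ha
    have hterm : ∀ i : Fin N', ρ (σ ^ (i : ℕ)) ((a i : A) : V) = 0 := by
      intro i
      have hmem1 : ρ (σ ^ (i : ℕ)) ((a i : A) : V) ∈ B i := ⟨(a i : V), (a i).2, rfl⟩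
      have heq : ρ (σ ^ (i : ℕ)) ((a i : A) : V) =
          -∑ j ∈ Finset.univ.erase i, ρ (σ ^ (j : ℕ)) ((a j : A) : V) := by
        have := Finset.add_sum_erase Finset.univ
          (fun j : Fin N' => ρ (σ ^ (j : ℕ)) ((a j : A) : V)) (Finset.mem_univ i)
        rw [ha] at this
        exact eq_neg_of_add_eq_zero_left this
      have hmem2 : ρ (σ ^ (i : ℕ)) ((a i : A) : V) ∈ (Finset.univ.erase i).sup B := by
        rw [heq]
        apply Submodule.neg_mem
        apply Submodule.sum_mem
        intro j hj
        exact Finset.le_sup (f := B) hj ⟨(a j : V), (a j).2, rfl⟩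
      have : ρ (σ ^ (i : ℕ)) ((a i : A) : V) ∈ B i ⊓ (Finset.univ.erase i).sup B :=
        ⟨hmem1, hmem2⟩
      rw [hdisj i] at this
      exact (Submodule.mem_bot k).1 this
    have haz : ∀ i : Fin N', a i = 0 := by
      intro i
      have h1 := hterm i
      have h2 : ρ (σ ^ (i : ℕ))⁻¹ (ρ (σ ^ (i : ℕ)) ((a i : A) : V)) = ((a i : A) : V) := by
        rw [← Module.End.mul_apply, ← map_mul, inv_mul_cancel, map_one, Module.End.one_apply]
      rw [h1, map_zero] at h2
      exact Subtype.ext h2.symm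
    rw [Submodule.mem_bot]
    funext i
    exact haz i
  have hbij : Function.Bijective Φ := ⟨hΦinj, hΦsurj⟩
  set eΦ := LinearEquiv.ofBijective Φ hbij with heΦ
  have hkey : ∀ y : V, Φ (eΦ.symm y) = y := fun y => eΦ.apply_symm_apply y
  refine ⟨N', hN'0, hN'dvd, A, hAirr, ?_, ?_, ?_, ?_⟩
  · exact hdistinct
  · exact hEA' N' hN'E
  · refine ⟨eΦ.symm, fun n x => ?_⟩
    apply eΦ.injective
    have h1 : eΦ (eΦ.symm ((ρ.comp N.subtype) n x)) = (ρ.comp N.subtype) n x :=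
      eΦ.apply_symm_apply _
    rw [h1]
    have h2 : eΦ ((dirSumRep θs) n (eΦ.symm x)) = Φ ((dirSumRep θs) n (eΦ.symm x)) := rfl
    rw [h2, hΦequiv, hkey]
  · have h1 := eΦ.symm.finrank_eq
    rw [h1, Module.finrank_pi_fintype, Finset.sum_const, Finset.card_univ,
      Fintype.card_fin, smul_eq_mul]
end

section
/- Let k be an algebraically closed field of characteristic 0, G a group, N a normal subgroup of G with G/N finite cyclic of order m, and σ ∈ G an element whose image generates G/N. Let V be a finite-dimensional irreducible k-linear representation of G, and let A be an irreducible N-subrepresentation of Res_N V. If the m conjugate representations A^{σ^i} for 0 ≤ i < m are pairwise non-isomorphic, then V is isomorphic, as a representation of G, to the induced representation Ind_N^G A. -/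
section Aux

open Module

variable {k : Type*} [Field k]

section Basic
variable {M : Type*} [Monoid M] {V W : Type*} [AddCommGroup V] [Module k V]
  [AddCommGroup W] [Module k W]

theorem RepIso.symm' {θ₁ : Representation k M V} {θ₂ : Representation k M W}
    (h : RepIso θ₁ θ₂) : RepIso θ₂ θ₁ := by
  obtain ⟨e, he⟩ := h
  refine ⟨e.symm, fun g x => e.injective ?_⟩
  rw [he, e.apply_symm_apply, e.apply_symm_apply]

theorem RepIso.trans' {U : Type*} [AddCommGroup U] [Module k U]
    {θ₁ : Representation k M V} {θ₂ : Representation k M W} {θ₃ : Representation k M U}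
    (h : RepIso θ₁ θ₂) (h' : RepIso θ₂ θ₃) : RepIso θ₁ θ₃ := by
  obtain ⟨e, he⟩ := h
  obtain ⟨f, hf⟩ := h'
  exact ⟨e.trans f, fun g x => by simp [he, hf]⟩

@[simp] theorem subRep_coe (ρ : Representation k M V) (P : Submodule k V)
    (h : ρ.IsSubrep P) (g : M) (x : P) : ((ρ.subRep P h) g x : V) = ρ g (x : V) := rfl

/-- Schur: a nonzero equivariant map between irreducible representations is an iso. -/
theorem schur {θ₁ : Representation k M V} {θ₂ : Representation k M W}
    (h₁ : θ₁.IsIrreducibleRep) (h₂ : θ₂.IsIrreducibleRep)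
    (f : V →ₗ[k] W) (hf : ∀ g x, f (θ₁ g x) = θ₂ g (f x)) (hne : f ≠ 0) :
    RepIso θ₁ θ₂ := by
  have hker : LinearMap.ker f = ⊥ := by
    rcases h₁.2 (LinearMap.ker f) (fun g x hx => by
      simp only [LinearMap.mem_ker] at hx ⊢
      rw [hf, hx, map_zero]) with h | h
    · exact h
    · exact absurd (LinearMap.ker_eq_top.mp h) hne
  have hrange : LinearMap.range f = ⊤ := by
    rcases h₂.2 (LinearMap.range f) (fun g y hy => by
      obtain ⟨x, rfl⟩ := hy
      exact ⟨θ₁ g x, hf g x⟩) with h | h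
    · exact absurd (LinearMap.range_eq_bot.mp h) hne
    · exact h
  exact ⟨LinearEquiv.ofBijective f
    ⟨LinearMap.ker_eq_bot.mp hker, LinearMap.range_eq_top.mp hrange⟩, fun g x => hf g x⟩

/-- An irreducible subrepresentation gives an irreducible representation. -/
theorem subRep_isIrreducible (ρ : Representation k M V) (P : Submodule k V)
    (hP : ρ.IsIrreducibleSubrep P) : (ρ.subRep P hP.1).IsIrreducibleRep := by
  constructor
  · have : Nontrivial P := Submodule.nontrivial_iff_ne_bot.mpr hP.2.1
    exact bot_ne_top
  · intro q hq
    have hle : q.map P.subtype ≤ P := by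
      rintro x ⟨y, hy, rfl⟩
      exact y.2
    have hst : ρ.IsSubrep (q.map P.subtype) := by
      rintro g x ⟨y, hy, rfl⟩
      exact ⟨(ρ.subRep P hP.1) g y, hq g y hy, rfl⟩
    have hinj : Function.Injective (Submodule.map P.subtype) :=
      Submodule.map_injective_of_injective P.injective_subtype
    rcases hP.2.2 _ hle hst with h | h
    · left
      apply hinj
      rw [h, Submodule.map_bot]
    · right
      apply hinj
      rw [h, Submodule.map_subtype_top]

theorem isSubrep_sup (ρ : Representation k M V) {p q : Submodule k V}
    (hp : ρ.IsSubrep p) (hq : ρ.IsSubrep q) : ρ.IsSubrep (p ⊔ q) := by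
  intro g x hx
  rw [Submodule.mem_sup] at hx ⊢
  obtain ⟨y, hy, z, hz, rfl⟩ := hx
  exact ⟨ρ g y, hp g y hy, ρ g z, hq g z hz, (map_add _ _ _).symm⟩

theorem isSubrep_finsetSup (ρ : Representation k M V) (s : Finset ℕ)
    (B : ℕ → Submodule k V) (h : ∀ i ∈ s, ρ.IsSubrep (B i)) : ρ.IsSubrep (s.sup B) := by
  classical
  induction s using Finset.induction_on with
  | empty => intro g x hx; simp_all
  | insert a s ha ih =>
    rw [Finset.sup_insert]
    exact isSubrep_sup ρ (h a (Finset.mem_insert_self a s))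
      (ih fun i hi => h i (Finset.mem_insert_of_mem hi))

/-- The quotient representation on `V ⧸ T` for a stable submodule `T`. -/
def quotRep (ρ : Representation k M V) (T : Submodule k V) (hT : ρ.IsSubrep T) :
    Representation k M (V ⧸ T) where
  toFun g := Submodule.mapQ T T (ρ g) (fun x hx => hT g x hx)
  map_one' := by
    apply Submodule.linearMap_qext
    ext x
    simp
  map_mul' g g' := by
    apply Submodule.linearMap_qext
    ext x
    simp [Submodule.mapQ_apply]

@[simp] theorem quotRep_mk (ρ : Representation k M V) (T : Submodule k V)
    (hT : ρ.IsSubrep T) (g : M) (x : V) :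
    quotRep ρ T hT g (T.mkQ x) = T.mkQ (ρ g x) := rfl

theorem quot_irr (ρ : Representation k M V) (T Q : Submodule k V) (hT : ρ.IsSubrep T)
    (hQ : ρ.IsIrreducibleSubrep Q) (hdisj : Disjoint Q T) :
    (quotRep ρ T hT).IsIrreducibleSubrep (Q.map T.mkQ) := by
  refine ⟨?_, ?_, ?_⟩
  · rintro g x ⟨y, hy, rfl⟩
    exact ⟨ρ g y, hQ.1 g y hy, (quotRep_mk ρ T hT g y).symm⟩
  · intro h
    obtain ⟨x, hxQ, hx0⟩ := Submodule.exists_mem_ne_zero_of_ne_bot hQ.2.1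
    have : T.mkQ x ∈ Q.map T.mkQ := ⟨x, hxQ, rfl⟩
    rw [h, Submodule.mem_bot, Submodule.mkQ_apply, Submodule.Quotient.mk_eq_zero] at this
    exact hx0 (Submodule.disjoint_def.mp hdisj x hxQ this)
  · intro q hqle hqst
    set q₀ := Q ⊓ Submodule.comap T.mkQ q with hq₀def
    have hq₀st : ρ.IsSubrep q₀ := by
      intro g x hx
      refine ⟨hQ.1 g x hx.1, ?_⟩
      have := hqst g (T.mkQ x) hx.2
      rwa [quotRep_mk] at this
    have hqeq : q = q₀.map T.mkQ := by
      apply le_antisymm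
      · intro y hy
        obtain ⟨x, hxQ, rfl⟩ := hqle hy
        exact ⟨x, ⟨hxQ, hy⟩, rfl⟩
      · rintro y ⟨x, hx, rfl⟩
        exact hx.2
    rcases hQ.2.2 q₀ inf_le_left hq₀st with h | h
    · left
      rw [hqeq, h, Submodule.map_bot]
    · right
      rw [hqeq, h]

theorem quot_repIso (ρ : Representation k M V) (T Q : Submodule k V) (hT : ρ.IsSubrep T)
    (hQsub : ρ.IsSubrep Q) (hQ'sub : (quotRep ρ T hT).IsSubrep (Q.map T.mkQ))
    (hdisj : Disjoint Q T) :
    RepIso (ρ.subRep Q hQsub) ((quotRep ρ T hT).subRep (Q.map T.mkQ) hQ'sub) := by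
  set g : Q →ₗ[k] (Q.map T.mkQ : Submodule k (V ⧸ T)) :=
    LinearMap.codRestrict _ (T.mkQ ∘ₗ Q.subtype) (fun x => ⟨x, x.2, rfl⟩) with hgdef
  have hb : Function.Bijective g := by
    constructor
    · rw [← LinearMap.ker_eq_bot, LinearMap.ker_eq_bot']
      intro x hx
      have : T.mkQ (x : V) = 0 := congrArg Subtype.val hx
      rw [Submodule.mkQ_apply, Submodule.Quotient.mk_eq_zero] at this
      exact Subtype.ext (Submodule.disjoint_def.mp hdisj _ x.2 this)
    · rintro ⟨y, x, hx, rfl⟩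
      exact ⟨⟨x, hx⟩, rfl⟩
  refine ⟨LinearEquiv.ofBijective g hb, fun n x => ?_⟩
  apply Subtype.ext
  show (T.mkQ (ρ n (x : V)) : V ⧸ T) = quotRep ρ T hT n (T.mkQ (x : V))
  rw [quotRep_mk]

/-- Core step: an irreducible subrep `P` contained in `T ⊔ Q` but not in `T`,
with `Q` irreducible disjoint from the stable `T`, is isomorphic to `Q`. -/
theorem no_embed (ρ : Representation k M V) (P Q T : Submodule k V)
    (hP : ρ.IsIrreducibleSubrep P) (hQ : ρ.IsIrreducibleSubrep Q) (hT : ρ.IsSubrep T)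
    (hle : P ≤ T ⊔ Q) (hPT : ¬ P ≤ T) (hQT : Disjoint Q T) :
    RepIso (ρ.subRep P hP.1) (ρ.subRep Q hQ.1) := by
  set ρQ := quotRep ρ T hT with hρQ
  set Q' := Q.map T.mkQ with hQ'def
  have hQ' : ρQ.IsIrreducibleSubrep Q' := quot_irr ρ T Q hT hQ hQT
  have hcmem : ∀ x : P, T.mkQ (x : V) ∈ Q' := by
    intro x
    have hx : (x : V) ∈ T ⊔ Q := hle x.2
    rw [Submodule.mem_sup] at hx
    obtain ⟨t, ht, q, hq, hx⟩ := hx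
    have : T.mkQ (x : V) = T.mkQ q := by
      rw [← hx, map_add]
      have : T.mkQ t = 0 := by rwa [Submodule.mkQ_apply, Submodule.Quotient.mk_eq_zero]
      rw [this, zero_add]
    rw [this]
    exact ⟨q, hq, rfl⟩
  set f : P →ₗ[k] Q' := LinearMap.codRestrict _ (T.mkQ ∘ₗ P.subtype) hcmem with hfdef
  have hfe : ∀ n x, f ((ρ.subRep P hP.1) n x) = (ρQ.subRep Q' hQ'.1) n (f x) := by
    intro n x
    apply Subtype.ext
    show T.mkQ (ρ n (x : V)) = ρQ n (T.mkQ (x : V))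
    rw [hρQ, quotRep_mk]
  have hfne : f ≠ 0 := by
    intro h0
    apply hPT
    intro x hx
    have : f ⟨x, hx⟩ = 0 := by rw [h0]; rfl
    have : T.mkQ x = 0 := congrArg Subtype.val this
    rwa [Submodule.mkQ_apply, Submodule.Quotient.mk_eq_zero] at this
  have hiso1 : RepIso (ρ.subRep P hP.1) (ρQ.subRep Q' hQ'.1) :=
    schur (subRep_isIrreducible ρ P hP) (subRep_isIrreducible ρQ Q' hQ') f hfe hfne
  exact hiso1.trans' (quot_repIso ρ T Q hT hQ.1 hQ'.1 hQT).symm'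

/-- Chain disjointness for pairwise non-isomorphic irreducible subrepresentations. -/
theorem chain_disjoint (ρ : Representation k M V) (m : ℕ) (B : ℕ → Submodule k V)
    (hB : ∀ i, ρ.IsIrreducibleSubrep (B i))
    (hdist : ∀ i j, i < m → j < m → i ≠ j →
      ¬ RepIso (ρ.subRep (B i) (hB i).1) (ρ.subRep (B j) (hB j).1)) :
    ∀ j < m, Disjoint (B j) ((Finset.range j).sup B) := by
  intro j
  induction j using Nat.strong_induction_on with
  | _ j IH =>
    intro hj
    by_contra hnd
    have hle : B j ≤ (Finset.range j).sup B := by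
      have hsub : ρ.IsSubrep (B j ⊓ (Finset.range j).sup B) := by
        intro g x hx
        exact ⟨(hB j).1 g x hx.1,
          isSubrep_finsetSup ρ _ B (fun i _ => (hB i).1) g x hx.2⟩
      rcases (hB j).2.2 _ inf_le_left hsub with h | h
      · exact absurd (disjoint_iff.mpr h) hnd
      · exact inf_eq_left.mp h
    have key : ∀ l, l ≤ j → ¬ B j ≤ (Finset.range l).sup B := by
      intro l
      induction l with
      | zero =>
        intro _ h0
        simp only [Finset.range_zero, Finset.sup_empty, le_bot_iff] at h0
        exact (hB j).2.1 h0
      | succ l IHl =>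
        intro hlj hle1
        rw [Finset.range_add_one, Finset.sup_insert] at hle1
        by_cases hc : B j ≤ (Finset.range l).sup B
        · exact IHl (Nat.le_of_succ_le hlj) hc
        · have hlj' : l < j := Nat.lt_of_succ_le hlj
          have hlm : l < m := lt_trans hlj' hj
          have hdisjl : Disjoint (B l) ((Finset.range l).sup B) := IH l hlj' hlm
          have hiso := no_embed ρ (B j) (B l) ((Finset.range l).sup B)
            (hB j) (hB l) (isSubrep_finsetSup ρ _ B (fun i _ => (hB i).1))
            (by rwa [sup_comm]) hc hdisjl
          exact hdist j l hj hlm (Nat.ne_of_gt hlj') hiso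
    exact key j le_rfl hle

theorem sum_eq_zero_of_chain {m : ℕ} (B : ℕ → Submodule k V)
    (hd : ∀ j < m, Disjoint (B j) ((Finset.range j).sup B))
    (x : ℕ → V) (hx : ∀ i, x i ∈ B i) :
    ∀ n, n ≤ m → (∑ i ∈ Finset.range n, x i) = 0 → ∀ i < n, x i = 0 := by
  intro n
  induction n with
  | zero => intro _ _ i hi; omega
  | succ n IHn =>
    intro hnm hsum i hi
    rw [Finset.sum_range_succ] at hsum
    have hS : (∑ i ∈ Finset.range n, x i) ∈ (Finset.range n).sup B :=
      Submodule.sum_mem _ fun i hi => Finset.le_sup (f := B) hi (hx i)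
    have hxn : x n = 0 := by
      have h1 : x n ∈ (Finset.range n).sup B := by
        have : x n = -(∑ i ∈ Finset.range n, x i) := by
          rw [eq_neg_iff_add_eq_zero, add_comm]; exact hsum
        rw [this]
        exact neg_mem hS
      exact Submodule.disjoint_def.mp (hd n hnm) _ (hx n) h1
    rcases Nat.lt_succ_iff_lt_or_eq.mp hi with h | h
    · apply IHn (Nat.le_of_succ_le hnm) _ i h
      rw [hxn, add_zero] at hsum
      exact hsum
    · rw [h]; exact hxn

/-- Transport of irreducible subreps along an intertwining linear equivalence. -/
theorem map_equiv_irr (θ₁ : Representation k M V) (θ₂ : Representation k M W)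
    (e : V ≃ₗ[k] W) (he : ∀ g x, e (θ₁ g x) = θ₂ g (e x)) (P : Submodule k V)
    (hP : θ₁.IsIrreducibleSubrep P) :
    ∃ h2 : θ₂.IsIrreducibleSubrep (P.map (e : V →ₗ[k] W)),
      RepIso (θ₁.subRep P hP.1) (θ₂.subRep (P.map (e : V →ₗ[k] W)) h2.1) := by
  have hinj : Function.Injective (e : V →ₗ[k] W) := e.injective
  have h2 : θ₂.IsIrreducibleSubrep (P.map (e : V →ₗ[k] W)) := by
    refine ⟨?_, ?_, ?_⟩
    · rintro g y ⟨x, hx, rfl⟩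
      exact ⟨θ₁ g x, hP.1 g x hx, he g x⟩
    · intro h
      apply hP.2.1
      apply Submodule.map_injective_of_injective hinj
      rw [h, Submodule.map_bot]
    · intro q hqle hqst
      set q₀ := q.comap (e : V →ₗ[k] W) with hq₀
      have hq₀le : q₀ ≤ P := by
        intro x hx
        obtain ⟨y, hy, hyx⟩ := hqle hx
        rwa [← hinj hyx]
      have hq₀st : θ₁.IsSubrep q₀ := by
        intro g x hx
        have : (e : V →ₗ[k] W) (θ₁ g x) ∈ q := by
          show e (θ₁ g x) ∈ q
          rw [he]
          exact hqst g _ hx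
        exact this
      have hqeq : q = q₀.map (e : V →ₗ[k] W) :=
        (Submodule.map_comap_eq_self (by rw [LinearEquiv.range]; exact le_top)).symm
      rcases hP.2.2 q₀ hq₀le hq₀st with h | h
      · left; rw [hqeq, h, Submodule.map_bot]
      · right; rw [hqeq, h]
  refine ⟨h2, ?_⟩
  set f : P →ₗ[k] (P.map (e : V →ₗ[k] W) : Submodule k W) :=
    LinearMap.codRestrict _ ((e : V →ₗ[k] W) ∘ₗ P.subtype) (fun x => ⟨x, x.2, rfl⟩) with hf
  have hb : Function.Bijective f := by
    constructor
    · rw [← LinearMap.ker_eq_bot, LinearMap.ker_eq_bot']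
      intro x hx
      have h0 : e (x : V) = 0 := congrArg Subtype.val hx
      exact Subtype.ext (e.map_eq_zero_iff.mp h0)
    · rintro ⟨y, x, hx, rfl⟩
      exact ⟨⟨x, hx⟩, rfl⟩
  refine ⟨LinearEquiv.ofBijective f hb, fun g x => ?_⟩
  apply Subtype.ext
  show e (θ₁ g (x : V)) = θ₂ g (e (x : V))
  exact he g (x : V)

end Basic

section ConjSec
variable {G : Type*} [Group G] {V W : Type*} [AddCommGroup V] [Module k V]
  [AddCommGroup W] [Module k W] (N : Subgroup G) [N.Normal]

theorem conj_apply (θ : Representation k N W) (g : G) (n : N) :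
    Representation.conj N θ g n = θ ((MulAut.conjNormal g⁻¹) n) := rfl

theorem conjNormal_inv_apply (g : G) (n : N) :
    (MulAut.conjNormal g⁻¹) ((MulAut.conjNormal g) n) = n := by
  apply Subtype.ext
  simp only [MulAut.conjNormal_apply]
  group

theorem conj_isSubrep {θ : Representation k N W} {p : Submodule k W} (g : G)
    (h : θ.IsSubrep p) : (Representation.conj N θ g).IsSubrep p :=
  fun n x hx => h _ x hx

theorem isSubrep_of_conj {θ : Representation k N W} {p : Submodule k W} (g : G)
    (h : (Representation.conj N θ g).IsSubrep p) : θ.IsSubrep p := by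
  intro n x hx
  have h2 := h ((MulAut.conjNormal g) n) x hx
  rwa [conj_apply, conjNormal_inv_apply] at h2

theorem conj_irrSubrep {θ : Representation k N W} {p : Submodule k W} (g : G)
    (h : θ.IsIrreducibleSubrep p) :
    (Representation.conj N θ g).IsIrreducibleSubrep p :=
  ⟨conj_isSubrep N g h.1, h.2.1, fun q hq hqst => h.2.2 q hq (isSubrep_of_conj N g hqst)⟩

theorem conj_subRep (θ : Representation k N W) (p : Submodule k W) (h : θ.IsSubrep p)
    (g : G) (h' : (Representation.conj N θ g).IsSubrep p) :
    Representation.conj N (θ.subRep p h) g = (Representation.conj N θ g).subRep p h' := rfl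

/-- The linear equivalence given by the action of a group element. -/
def repEquiv (ρ : Representation k G V) (g : G) : V ≃ₗ[k] V :=
  LinearEquiv.ofLinear (ρ g) (ρ g⁻¹)
    (by rw [← Module.End.mul_eq_comp, ← map_mul, mul_inv_cancel, map_one]; rfl)
    (by rw [← Module.End.mul_eq_comp, ← map_mul, inv_mul_cancel, map_one]; rfl)

@[simp] theorem repEquiv_apply (ρ : Representation k G V) (g : G) (x : V) :
    repEquiv ρ g x = ρ g x := rfl

@[simp] theorem repEquiv_coe (ρ : Representation k G V) (g : G) :
    ((repEquiv ρ g : V ≃ₗ[k] V) : V →ₗ[k] V) = ρ g := rfl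

end ConjSec

end Aux

/-- If `G/N` is finite cyclic of order `m` generated by the image of `σ`, `V` is a
finite-dimensional irreducible representation of `G` over an algebraically closed field of
characteristic `0`, `A` is an irreducible `N`-subrepresentation of `Res_N V`, and the `m`
conjugates `A^{σ^i}`, `0 ≤ i < m`, are pairwise non-isomorphic, then `V ≅ Ind_N^G A`. -/
theorem irreducible_is_induced_of_distinct_conjugates
    {k G V : Type*} [Field k] [IsAlgClosed k] [CharZero k] [Group G]
    [AddCommGroup V] [Module k V] [FiniteDimensional k V]
    (N : Subgroup G) [N.Normal] (m : ℕ) (hm : 0 < m)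
    (hcard : Nat.card (G ⧸ N) = m) (σ : G)
    (hgen : Subgroup.zpowers (QuotientGroup.mk σ : G ⧸ N) = ⊤)
    (ρ : Representation k G V) (hρ : ρ.IsIrreducibleRep)
    (A : Submodule k V)
    (hA : Representation.IsIrreducibleSubrep (ρ.comp N.subtype) A)
    (hdist : ∀ i j : Fin m, i ≠ j →
      ¬ RepIso
        (Representation.conj N
          (Representation.subRep (ρ.comp N.subtype) A hA.1) (σ ^ (i : ℕ)))
        (Representation.conj N
          (Representation.subRep (ρ.comp N.subtype) A hA.1) (σ ^ (j : ℕ)))) :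
    RepIso ρ (indRep N (Representation.subRep (ρ.comp N.subtype) A hA.1)) := by
  classical
  set ρN : Representation k N V := ρ.comp N.subtype with hρN
  set θ : Representation k N A := Representation.subRep ρN A hA.1 with hθ
  -- quotient group facts
  have hfinQ : Finite (G ⧸ N) := Nat.finite_of_card_ne_zero (by omega)
  set σ' : G ⧸ N := (σ : G ⧸ N) with hσ'
  have horder : orderOf σ' = m := by
    rw [← Nat.card_zpowers, hgen, Subgroup.card_top, hcard]
  have hσ'gen : ∀ q : G ⧸ N, ∃ i : ℕ, i < m ∧ σ' ^ i = q := by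
    intro q
    have hq : q ∈ Subgroup.zpowers σ' := by rw [hgen]; trivial
    obtain ⟨n, hn⟩ := mem_powers_iff_mem_zpowers.mpr hq
    exact ⟨n % m, Nat.mod_lt n hm, by rw [← horder, pow_mod_orderOf]; exact hn⟩
  have hσ'inj : ∀ i j : ℕ, i < m → j < m → σ' ^ i = σ' ^ j → i = j := by
    intro i j hi hj h
    exact pow_injOn_Iio_orderOf (by rw [horder]; exact hi) (by rw [horder]; exact hj) h
  -- the conjugate family
  set B : ℕ → Submodule k V := fun i => A.map ((repEquiv ρ (σ ^ i) : V →ₗ[k] V)) with hB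
  have hint : ∀ i : ℕ, ∀ (n : N) (x : V),
      repEquiv ρ (σ ^ i) ((Representation.conj N ρN (σ ^ i)) n x)
        = ρN n (repEquiv ρ (σ ^ i) x) := by
    intro i n x
    show ρ (σ ^ i) (ρ (((MulAut.conjNormal (σ ^ i)⁻¹) n : G)) x) = ρ (n : G) (ρ (σ ^ i) x)
    rw [MulAut.conjNormal_apply]
    rw [← Module.End.mul_apply, ← map_mul, ← Module.End.mul_apply, ← map_mul]
    congr 2
    group
  have hAc : ∀ i : ℕ, (Representation.conj N ρN (σ ^ i)).IsIrreducibleSubrep A :=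
    fun i => conj_irrSubrep N _ hA
  have hBall := fun i => map_equiv_irr (Representation.conj N ρN (σ ^ i)) ρN
      (repEquiv ρ (σ ^ i)) (hint i) A (hAc i)
  choose hBirr hBiso using hBall
  have hBiso' : ∀ i : ℕ, RepIso (Representation.conj N θ (σ ^ i))
      (ρN.subRep (B i) (hBirr i).1) := by
    intro i
    rw [hθ, conj_subRep N ρN A hA.1 (σ ^ i) (hAc i).1]
    exact hBiso i
  have hBdist : ∀ i j, i < m → j < m → i ≠ j →
      ¬ RepIso (ρN.subRep (B i) (hBirr i).1) (ρN.subRep (B j) (hBirr j).1) := by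
    intro i j hi hj hne hiso
    exact hdist ⟨i, hi⟩ ⟨j, hj⟩ (by simpa [Fin.ext_iff] using hne)
      ((hBiso' i).trans' (hiso.trans' (hBiso' j).symm'))
  have hD : ∀ j < m, Disjoint (B j) ((Finset.range j).sup B) :=
    chain_disjoint ρN m B hBirr hBdist
  -- the induced representation
  set R : Submodule k (G →₀ A) := indRel N θ with hR
  set Φ0 : (G →₀ A) →ₗ[k] V := Finsupp.lsum k (fun g => (ρ g) ∘ₗ A.subtype) with hΦ0
  have hθval : ∀ (h : N) (a : A), ((θ h a : V)) = ρ (h : G) (a : V) := fun h a => rfl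
  have hrel : R ≤ LinearMap.ker Φ0 := by
    rw [hR, indRel, Submodule.span_le]
    rintro x ⟨g, h, a, rfl⟩
    simp only [SetLike.mem_coe, LinearMap.mem_ker, map_sub, hΦ0, Finsupp.lsum_single,
      LinearMap.coe_comp, Function.comp_apply, Submodule.coe_subtype]
    rw [hθval, map_mul, Module.End.mul_apply, sub_self]
  set Φ : ((G →₀ A) ⧸ R) →ₗ[k] V := Submodule.liftQ R Φ0 hrel with hΦ
  have hΦmk : ∀ (g : G) (a : A),
      Φ (Submodule.Quotient.mk (Finsupp.single g a)) = ρ g a := by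
    intro g a
    rw [hΦ]
    erw [Submodule.liftQ_apply]
    simp [hΦ0]
  have hΦeq : ∀ (g : G) x, Φ (indRep N θ g x) = ρ g (Φ x) := by
    intro g
    suffices h : Φ ∘ₗ (indRep N θ g) = (ρ g) ∘ₗ Φ by
      intro x
      exact LinearMap.congr_fun h x
    apply Submodule.linearMap_qext
    ext g' a
    show Φ (indRep N θ g (Submodule.Quotient.mk (Finsupp.single g' a)))
      = ρ g (Φ (Submodule.Quotient.mk (Finsupp.single g' a)))
    have h1 : indRep N θ g (Submodule.Quotient.mk (Finsupp.single g' a))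
        = Submodule.Quotient.mk (Finsupp.single (g * g') a) := by
      show Submodule.Quotient.mk (Finsupp.mapDomain (g * ·) (Finsupp.single g' a)) = _
      rw [Finsupp.mapDomain_single]
    rw [h1, hΦmk, hΦmk, map_mul, Module.End.mul_apply]
  -- surjectivity of Φ
  have hAle : A ≤ LinearMap.range Φ := by
    intro a ha
    exact ⟨Submodule.Quotient.mk (Finsupp.single 1 ⟨a, ha⟩), by rw [hΦmk]; simp⟩
  have hsurj : Function.Surjective Φ := by
    rw [← LinearMap.range_eq_top]
    have hst : ρ.IsSubrep (LinearMap.range Φ) := by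
      rintro g y ⟨x, rfl⟩
      exact ⟨indRep N θ g x, hΦeq g x⟩
    rcases hρ.2 _ hst with h | h
    · exact absurd (le_bot_iff.mp (h ▸ hAle)) hA.2.1
    · exact h
  -- the section map v
  have hmkout : ∀ q : G ⧸ N, ((Quotient.out q : G) : G ⧸ N) = q := fun q =>
    QuotientGroup.out_eq' q
  set v : ((G ⧸ N) →₀ A) →ₗ[k] ((G →₀ A) ⧸ R) :=
    Finsupp.lsum k (fun q => R.mkQ ∘ₗ Finsupp.lsingle (Quotient.out q)) with hv
  have hvsingle : ∀ (q : G ⧸ N) (a : A),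
      v (Finsupp.single q a) = Submodule.Quotient.mk (Finsupp.single (Quotient.out q) a) := by
    intro q a
    rw [hv, Finsupp.lsum_single]
    rfl
  have hvsurj : Function.Surjective v := by
    rw [← LinearMap.range_eq_top, ← top_le_iff]
    intro z hz
    clear hz
    obtain ⟨y, rfl⟩ := Submodule.Quotient.mk_surjective R z
    induction y using Finsupp.induction_linear with
    | zero =>
      rw [Submodule.Quotient.mk_zero]
      exact zero_mem _
    | add f g hf hg =>
      rw [Submodule.Quotient.mk_add]
      exact add_mem hf hg
    | single g a =>
      have hnmem : (Quotient.out ((g : G ⧸ N)))⁻¹ * g ∈ N := by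
        rw [← QuotientGroup.eq_one_iff]
        rw [QuotientGroup.mk_mul, QuotientGroup.mk_inv, hmkout]
        simp
      refine ⟨Finsupp.single ((g : G ⧸ N)) (θ ⟨_, hnmem⟩ a), ?_⟩
      rw [hvsingle, Submodule.Quotient.eq]
      have hgen2 : Finsupp.single ((Quotient.out ((g : G ⧸ N)) : G) *
            ((⟨(Quotient.out ((g : G ⧸ N)))⁻¹ * g, hnmem⟩ : N) : G)) a
          - Finsupp.single (Quotient.out ((g : G ⧸ N)))
            (θ ⟨(Quotient.out ((g : G ⧸ N)))⁻¹ * g, hnmem⟩ a) ∈ R := by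
        rw [hR, indRel]
        exact Submodule.subset_span ⟨_, _, _, rfl⟩
      have hsimp : (Quotient.out ((g : G ⧸ N)) : G) *
          ((⟨(Quotient.out ((g : G ⧸ N)))⁻¹ * g, hnmem⟩ : N) : G) = g := by
        group
      rw [hsimp] at hgen2
      rw [← neg_sub]
      exact neg_mem hgen2
  set ψ : ((G ⧸ N) →₀ A) →ₗ[k] V := Φ ∘ₗ v with hψ
  have hψsingle : ∀ (q : G ⧸ N) (a : A), ψ (Finsupp.single q a) = ρ (Quotient.out q) a := by
    intro q a
    rw [hψ, LinearMap.comp_apply, hvsingle, hΦmk]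
  -- injectivity of ψ
  haveI : Fintype (G ⧸ N) := Fintype.ofFinite _
  have hψinj : Function.Injective ψ := by
    rw [← LinearMap.ker_eq_bot, LinearMap.ker_eq_bot']
    intro f hf
    set x : ℕ → V := fun i => ρ (Quotient.out (σ' ^ i)) (f (σ' ^ i) : V) with hx
    have hxB : ∀ i : ℕ, x i ∈ B i := by
      intro i
      have hn : (σ ^ i)⁻¹ * Quotient.out (σ' ^ i) ∈ N := by
        rw [← QuotientGroup.eq_one_iff, QuotientGroup.mk_mul, QuotientGroup.mk_inv,
          QuotientGroup.mk_pow, hmkout, ← hσ']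
        simp
      have hd : Quotient.out (σ' ^ i) = σ ^ i * ((σ ^ i)⁻¹ * Quotient.out (σ' ^ i)) := by
        group
      refine ⟨ρN ⟨_, hn⟩ (f (σ' ^ i) : V), hA.1 ⟨_, hn⟩ _ (f (σ' ^ i)).2, ?_⟩
      show ρ (σ ^ i) (ρ ((σ ^ i)⁻¹ * Quotient.out (σ' ^ i)) (f (σ' ^ i) : V)) = x i
      rw [← Module.End.mul_apply, ← map_mul, hx]
      congr 2
      group
    have hsum : (∑ i ∈ Finset.range m, x i) = 0 := by
      have h1 : ψ f = f.sum fun q a => ρ (Quotient.out q) (a : V) := by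
        conv_lhs => rw [← Finsupp.sum_single f, map_finsuppSum]
        exact Finsupp.sum_congr fun q _ => hψsingle q (f q)
      have h2 : f.sum (fun q a => ρ (Quotient.out q) (a : V))
          = ∑ q : G ⧸ N, ρ (Quotient.out q) (f q : V) :=
        Finsupp.sum_fintype _ _ (fun q => by simp)
      have h3 : (∑ q : G ⧸ N, ρ (Quotient.out q) (f q : V))
          = ∑ i ∈ Finset.range m, x i := by
        rw [hx]
        refine (Finset.sum_bij (fun i _ => σ' ^ i) (fun i _ => Finset.mem_univ _)
          ?_ ?_ ?_).symm
        · intro i hi j hj h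
          exact hσ'inj i j (Finset.mem_range.mp hi) (Finset.mem_range.mp hj) h
        · intro q _
          obtain ⟨i, hi, hiq⟩ := hσ'gen q
          exact ⟨i, Finset.mem_range.mpr hi, hiq⟩
        · intro i _
          rfl
      rw [← h3, ← h2, ← h1, hf]
    have hzero := sum_eq_zero_of_chain B hD x hxB m le_rfl hsum
    ext q
    obtain ⟨i, him, rfl⟩ := hσ'gen q
    have h0 : x i = 0 := hzero i him
    have hinj2 : Function.Injective (ρ (Quotient.out (σ' ^ i))) :=
      (repEquiv ρ (Quotient.out (σ' ^ i))).injective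
    have hfz : (f (σ' ^ i) : V) = 0 := by
      apply hinj2
      rw [hx] at h0
      simpa using h0
    simpa using hfz
  -- conclusion
  have hΦinj : Function.Injective Φ := by
    intro x y hxy
    obtain ⟨w, rfl⟩ := hvsurj x
    obtain ⟨w', rfl⟩ := hvsurj y
    have hww : w = w' := hψinj (show ψ w = ψ w' from hxy)
    rw [hww]
  have hbij : Function.Bijective Φ := ⟨hΦinj, hsurj⟩
  set eΦ : ((G →₀ A) ⧸ R) ≃ₗ[k] V := LinearEquiv.ofBijective Φ hbij with heΦ
  refine ⟨eΦ.symm, fun g x => eΦ.injective ?_⟩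
  have h4 : ∀ z, eΦ z = Φ z := fun z => rfl
  rw [eΦ.apply_symm_apply, h4, hΦeq, ← h4, eΦ.apply_symm_apply]
end
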